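/- arXiv:math/0409018 — 5 statements merged into one kernel-verified Lean document; each statement's English description precedes it below -/
import Mathlib

section
/- Let f, g : ℝ² → ℝ be measurable. Then for all s, t > 0 one has (f+g)**_{yx}(s,t) ≤ f**_{yx}(s,t) + g**_{yx}(s,t); that is, the operator f ↦ f**_{yx} is subadditive. -/
open MeasureTheory ENNReal Set

noncomputable section

/-- Decreasing rearrangement of an `ℝ≥0∞`-valued function on `ℝ` (w.r.t. Lebesgue measure):
`h*(t) = inf {σ : |{x : σ < h x}| ≤ t}`. -/
def rearrE (h : ℝ → ℝ≥0∞) (t : ℝ) : ℝ≥0∞ :=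
  sInf {σ : ℝ≥0∞ | volume {x : ℝ | σ < h x} ≤ ENNReal.ofReal t}

/-- Decreasing rearrangement of a real-valued function on `ℝ`. -/
def rearr (h : ℝ → ℝ) (t : ℝ) : ℝ≥0∞ :=
  rearrE (fun x => ENNReal.ofReal |h x|) t

/-- `f*_y(x,t)`: rearrangement in the second variable. -/
def rearrY (f : ℝ × ℝ → ℝ) (x t : ℝ) : ℝ≥0∞ := rearr (fun y => f (x, y)) t

/-- `f*_x(s,y)`: rearrangement in the first variable. -/
def rearrX (f : ℝ × ℝ → ℝ) (s y : ℝ) : ℝ≥0∞ := rearr (fun x => f (x, y)) s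

/-- The multivariate rearrangement `f*_{yx}(s,t) = (x ↦ f*_y(x,t))*(s)`. -/
def rearrYX (f : ℝ × ℝ → ℝ) (s t : ℝ) : ℝ≥0∞ := rearrE (fun x => rearrY f x t) s

/-- `f**_{yx}(s,t) = (1/s)∫_0^s (x ↦ (1/t)∫_0^t f*_y(x,τ) dτ)*(σ) dσ`. -/
def starstarYX (f : ℝ × ℝ → ℝ) (s t : ℝ) : ℝ≥0∞ :=
  (ENNReal.ofReal s)⁻¹ *
    ∫⁻ σ in Ioo (0:ℝ) s,
      rearrE (fun x => (ENNReal.ofReal t)⁻¹ * ∫⁻ τ in Ioo (0:ℝ) t, rearrY f x τ) σ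

/-- `f**(s,t) = (1/(st))∫_0^s∫_0^t f*_{yx}(σ,τ) dσ dτ`. -/
def starstar (f : ℝ × ℝ → ℝ) (s t : ℝ) : ℝ≥0∞ :=
  (ENNReal.ofReal (s * t))⁻¹ * ∫⁻ σ in Ioo (0:ℝ) s, ∫⁻ τ in Ioo (0:ℝ) t, rearrYX f σ τ

/-- Decreasing rearrangement of `f : ℝ² → ℝ` w.r.t. two-dimensional Lebesgue measure. -/
def rearr2 (f : ℝ × ℝ → ℝ) (θ : ℝ) : ℝ≥0∞ :=
  sInf {σ : ℝ≥0∞ | volume {z : ℝ × ℝ | σ < ENNReal.ofReal |f z|} ≤ ENNReal.ofReal θ}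

/-- A weight on `ℝ₊`: nonnegative and locally integrable. -/
def IsWeight (u : ℝ → ℝ) : Prop :=
  (∀ x, 0 ≤ u x) ∧ LocallyIntegrableOn u (Ioi 0)

/-- A weight on `ℝ²₊`: nonnegative and locally integrable. -/
def IsWeight2 (w : ℝ × ℝ → ℝ) : Prop :=
  (∀ z, 0 ≤ w z) ∧ LocallyIntegrableOn w (Ioi 0 ×ˢ Ioi 0)

/-- `‖g‖_{Λ^p(u)}` for `g : ℝ → ℝ`. -/
def lamNorm (p : ℝ) (u : ℝ → ℝ) (g : ℝ → ℝ) : ℝ≥0∞ :=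
  (∫⁻ t in Ioi (0:ℝ), (rearr g t) ^ p * ENNReal.ofReal (u t)) ^ (1 / p)

/-- `‖f‖_{Λ₂^p(w)}` for `f : ℝ² → ℝ` and a weight `w` on `ℝ²₊`. -/
def lam2Norm (p : ℝ) (w : ℝ × ℝ → ℝ) (f : ℝ × ℝ → ℝ) : ℝ≥0∞ :=
  (∫⁻ s in Ioi (0:ℝ), ∫⁻ t in Ioi (0:ℝ),
      (rearrYX f s t) ^ p * ENNReal.ofReal (w (s, t))) ^ (1 / p)

/-- `‖f‖_{Λ^p(ℝ²,u)}`, by means of the 2D rearrangement. -/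
def lamR2Norm (p : ℝ) (u : ℝ → ℝ) (f : ℝ × ℝ → ℝ) : ℝ≥0∞ :=
  (∫⁻ θ in Ioi (0:ℝ), (rearr2 f θ) ^ p * ENNReal.ofReal (u θ)) ^ (1 / p)

/-- The mixed Lorentz quasinorm `‖f‖_{Λ^p(u)[Λ^p(v)]}`. -/
def mixedNorm (p : ℝ) (u v : ℝ → ℝ) (f : ℝ × ℝ → ℝ) : ℝ≥0∞ :=
  (∫⁻ s in Ioi (0:ℝ),
      rearrE (fun x => ∫⁻ t in Ioi (0:ℝ), (rearrY f x t) ^ p * ENNReal.ofReal (v t)) s *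
        ENNReal.ofReal (u s)) ^ (1 / p)

/-- The mixed Lorentz quasinorm with the order of the variables reversed,
`‖f‖_{Λ^p(v)[Λ^p(u)]}`. -/
def mixedNormRev (p : ℝ) (v u : ℝ → ℝ) (f : ℝ × ℝ → ℝ) : ℝ≥0∞ :=
  (∫⁻ t in Ioi (0:ℝ),
      rearrE (fun y => ∫⁻ s in Ioi (0:ℝ), (rearrX f s y) ^ p * ENNReal.ofReal (u s)) t *
        ENNReal.ofReal (v t)) ^ (1 / p)

/-- The `B_p` condition for a weight on `ℝ₊`. -/
def Bp (p : ℝ) (v : ℝ → ℝ) : Prop :=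
  ∃ C : ℝ, 0 < C ∧ ∀ r : ℝ, 0 < r →
    ENNReal.ofReal (r ^ p) * ∫⁻ x in Ioi r, ENNReal.ofReal (v x / x ^ p) ≤
      ENNReal.ofReal C * ∫⁻ x in Ioo (0:ℝ) r, ENNReal.ofReal (v x)

/-- Two-dimensional Hardy operator acting on `ℝ≥0∞`-valued functions. -/
def S2E (g : ℝ × ℝ → ℝ≥0∞) (s t : ℝ) : ℝ≥0∞ :=
  (ENNReal.ofReal (s * t))⁻¹ * ∫⁻ σ in Ioo (0:ℝ) s, ∫⁻ τ in Ioo (0:ℝ) t, g (σ, τ)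

/-- Nonincreasing in each variable on `ℝ²₊`. -/
def BiAntitone (g : ℝ × ℝ → ℝ≥0∞) : Prop :=
  ∀ s s' t t' : ℝ, 0 < s' → s' ≤ s → 0 < t' → t' ≤ t → g (s, t) ≤ g (s', t')

/-- The class `B_p^{(2)}`: the two-dimensional Hardy operator is bounded on the cone of
nonnegative functions nonincreasing in each variable in `L^p(ℝ²₊, w)`. -/
def Bp2 (p : ℝ) (w : ℝ × ℝ → ℝ) : Prop :=
  ∃ C : ℝ, 0 < C ∧ ∀ g : ℝ × ℝ → ℝ≥0∞, Measurable g → BiAntitone g →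
    (∫⁻ s in Ioi (0:ℝ), ∫⁻ t in Ioi (0:ℝ), (S2E g s t) ^ p * ENNReal.ofReal (w (s, t))) ≤
      ENNReal.ofReal C *
        ∫⁻ s in Ioi (0:ℝ), ∫⁻ t in Ioi (0:ℝ), (g (s, t)) ^ p * ENNReal.ofReal (w (s, t))

/-- A decreasing subset of `ℝ²₊`. -/
def DecreasingSet (D : Set (ℝ × ℝ)) : Prop :=
  MeasurableSet D ∧ D ⊆ Ioi 0 ×ˢ Ioi 0 ∧
    ∀ s t s' t' : ℝ, (s, t) ∈ D → 0 < s' → s' ≤ s → 0 < t' → t' ≤ t → (s', t') ∈ D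

/-- `w(E) = ∫_E w`. -/
def wMeas (w : ℝ × ℝ → ℝ) (E : Set (ℝ × ℝ)) : ℝ≥0∞ := ∫⁻ z in E, ENNReal.ofReal (w z)

/-- `U(m) = ∫_0^m u(θ) dθ`, for `m ∈ [0,∞]`. -/
def Uof (u : ℝ → ℝ) (m : ℝ≥0∞) : ℝ≥0∞ :=
  ∫⁻ θ in {θ : ℝ | 0 < θ ∧ ENNReal.ofReal θ < m}, ENNReal.ofReal (u θ)

/-- A covering family of `ℝ²₊`: an increasing sequence of decreasing sets covering `ℝ²₊`. -/
def CoveringFamily (D : ℕ → Set (ℝ × ℝ)) : Prop :=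
  (∀ k, DecreasingSet (D k)) ∧ Monotone D ∧ (⋃ k, D k) = Ioi 0 ×ˢ Ioi 0

end

/-! The key identity is the K-functional formula
`∫₀ˢ h* = inf_{c ≥ 0} (s c + ∫ (h - c)₊)`, with the infimum attained at `c = h*(s)`; both
inequalities are read off the layer-cake formula `∫₀ˢ h* = ∫₀^∞ min(s, |{h > l}|) dl`.
Since `(h₁ + h₂ - c₁ - c₂)₊ ≤ (h₁ - c₁)₊ + (h₂ - c₂)₊`, the right-hand side is subadditive in `h`,
hence so is `h ↦ h**`. This is applied first in `y` for each fixed `x`, and then in `x` to the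
averages `x ↦ (1/t) ∫₀ᵗ f*_y(x,τ) dτ`, monotonicity of the rearrangement linking the two steps. -/

open scoped NNReal

namespace Rearrangement

variable {h h' : ℝ → ℝ≥0∞} {s t : ℝ}

theorem volume_lt_rearrE_le (h : ℝ → ℝ≥0∞) (t : ℝ) :
    volume {x | rearrE h t < h x} ≤ ENNReal.ofReal t := by
  set S := {σ : ℝ≥0∞ | volume {x | σ < h x} ≤ ENNReal.ofReal t}
  rcases eq_or_ne (sInf S) ∞ with htop | hfin
  · simp [rearrE, S, htop]
  -- right-continuity: the levels `sInf S + 1/n` lie in `S`, and their superlevel sets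
  -- increase to `{x | sInf S < h x}`
  have hmem : ∀ n : ℕ, volume {x | sInf S + (n : ℝ≥0∞)⁻¹ < h x} ≤ ENNReal.ofReal t := by
    intro n
    obtain ⟨σ, hσS, hσ⟩ := sInf_lt_iff.mp
      (ENNReal.lt_add_right hfin (ENNReal.inv_ne_zero.mpr (ENNReal.natCast_ne_top n)))
    exact (measure_mono fun x hx => hσ.le.trans_lt hx).trans hσS
  have hunion : {x | sInf S < h x} = ⋃ n : ℕ, {x | sInf S + (n : ℝ≥0∞)⁻¹ < h x} := by
    ext x
    simp only [mem_ofPred_eq, mem_iUnion]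
    refine ⟨fun hx => ?_, fun ⟨n, hn⟩ => le_self_add.trans_lt hn⟩
    obtain ⟨n, hn⟩ := ENNReal.exists_inv_nat_lt (tsub_pos_of_lt hx).ne'
    exact ⟨n, lt_tsub_iff_left.mp hn⟩
  have hmono : Monotone fun n : ℕ => {x | sInf S + (n : ℝ≥0∞)⁻¹ < h x} := fun m n hmn x hx =>
    lt_of_le_of_lt (add_le_add_right (ENNReal.inv_le_inv.mpr (Nat.cast_le.mpr hmn)) _) hx
  change volume {x | sInf S < h x} ≤ _
  rw [hunion, hmono.measure_iUnion]
  exact iSup_le hmem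

theorem rearrE_le_iff {σ : ℝ≥0∞} :
    rearrE h t ≤ σ ↔ volume {x | σ < h x} ≤ ENNReal.ofReal t :=
  ⟨fun hle => (measure_mono fun _ hx => hle.trans_lt hx).trans (volume_lt_rearrE_le h t),
    fun hσ => sInf_le hσ⟩

theorem lt_rearrE_iff {σ : ℝ≥0∞} :
    σ < rearrE h t ↔ ENNReal.ofReal t < volume {x | σ < h x} := by
  simpa only [not_le] using rearrE_le_iff.not

theorem rearrE_mono (hh : h ≤ h') (t : ℝ) : rearrE h t ≤ rearrE h' t :=
  sInf_le_sInf fun _ hσ => (measure_mono fun x hx => hx.trans_le (hh x)).trans hσ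

theorem rearrE_antitone (h : ℝ → ℝ≥0∞) : Antitone (rearrE h) :=
  fun _ _ hst => sInf_le_sInf fun _ hσ => hσ.trans (ENNReal.ofReal_le_ofReal hst)

theorem volume_pos_ofReal_lt (a : ℝ≥0∞) : volume {l : ℝ | 0 < l ∧ ENNReal.ofReal l < a} = a := by
  rcases eq_or_ne a ∞ with rfl | ha
  · simp only [ENNReal.ofReal_lt_top, and_true]
    exact Real.volume_Ioi
  have : {l : ℝ | 0 < l ∧ ENNReal.ofReal l < a} = Ioo 0 a.toReal := by
    ext l
    exact and_congr_right fun hl => ENNReal.ofReal_lt_iff_lt_toReal hl.le ha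
  rw [this, Real.volume_Ioo, sub_zero, ENNReal.ofReal_toReal ha]

theorem lintegral_eq_lintegral_measure_lt {α : Type*} [MeasurableSpace α] (μ : Measure α)
    [SFinite μ] {G : α → ℝ≥0∞} (hG : Measurable G) :
    ∫⁻ x, G x ∂μ = ∫⁻ l in Ioi (0:ℝ), μ {x | ENNReal.ofReal l < G x} := by
  set A : Set (α × ℝ) := {p | 0 < p.2 ∧ ENNReal.ofReal p.2 < G p.1}
  have hA : MeasurableSet A :=
    (measurableSet_lt measurable_const measurable_snd).inter
      (measurableSet_lt (ENNReal.measurable_ofReal.comp measurable_snd) (hG.comp measurable_fst))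
  calc ∫⁻ x, G x ∂μ = ∫⁻ x, volume (Prod.mk x ⁻¹' A) ∂μ :=
        lintegral_congr fun x => (volume_pos_ofReal_lt (G x)).symm
    _ = ∫⁻ l, μ ((·, l) ⁻¹' A) := by
        rw [← Measure.prod_apply hA, Measure.prod_apply_symm hA]
    _ = ∫⁻ l in Ioi (0:ℝ), μ {x | ENNReal.ofReal l < G x} := by
        rw [← lintegral_indicator measurableSet_Ioi]
        refine lintegral_congr fun l => ?_
        by_cases hl : 0 < l <;> simp [A, hl]

theorem volume_lt_rearrE_inter_Ioo (h : ℝ → ℝ≥0∞) (s : ℝ) (σ : ℝ≥0∞) :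
    volume ({τ | σ < rearrE h τ} ∩ Ioo 0 s) = min (ENNReal.ofReal s) (volume {x | σ < h x}) := by
  set d := volume {x | σ < h x}
  have hset : {τ | σ < rearrE h τ} = {τ | ENNReal.ofReal τ < d} := by
    ext τ; exact lt_rearrE_iff
  rcases eq_or_ne d ∞ with hd | hd
  · simp [hset, hd, Real.volume_Ioo]
  · have : {τ | ENNReal.ofReal τ < d} ∩ Ioo 0 s = Ioo 0 (min s d.toReal) := by
      ext τ
      simp only [mem_inter_iff, mem_ofPred_eq, mem_Ioo, lt_min_iff]
      constructor
      · rintro ⟨hτd, h0, hτs⟩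
        exact ⟨h0, hτs, (ENNReal.ofReal_lt_iff_lt_toReal h0.le hd).mp hτd⟩
      · rintro ⟨h0, hτs, hτd⟩
        exact ⟨(ENNReal.ofReal_lt_iff_lt_toReal h0.le hd).mpr hτd, h0, hτs⟩
    rw [hset, this, Real.volume_Ioo, sub_zero, ENNReal.ofReal_min, ENNReal.ofReal_toReal hd]

theorem setLIntegral_rearrE_eq_setLIntegral_min (h : ℝ → ℝ≥0∞) (s : ℝ) :
    ∫⁻ τ in Ioo 0 s, rearrE h τ =
      ∫⁻ l in Ioi 0, min (ENNReal.ofReal s) (volume {x | ENNReal.ofReal l < h x}) := by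
  rw [lintegral_eq_lintegral_measure_lt _ (rearrE_antitone h).measurable]
  refine setLIntegral_congr_fun measurableSet_Ioi fun l _ => ?_
  rw [Measure.restrict_apply (measurableSet_lt measurable_const (rearrE_antitone h).measurable),
    volume_lt_rearrE_inter_Ioo h s _]

theorem setLIntegral_Ioi_volume_lt (hh : Measurable h) (c : ℝ≥0) :
    ∫⁻ l in Ioi (c : ℝ), volume {x | ENNReal.ofReal l < h x} = ∫⁻ x, (h x - c) := by
  rw [lintegral_eq_lintegral_measure_lt volume (G := fun x => h x - c) (hh.sub measurable_const),
    ← (measurePreserving_add_right volume (c : ℝ)).setLIntegral_comp_preimage_emb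
      (measurableEmbedding_addRight _), preimage_add_const_Ioi, sub_self]
  refine setLIntegral_congr_fun measurableSet_Ioi fun l (hl : 0 < l) => ?_
  simp only [ENNReal.ofReal_add hl.le c.coe_nonneg, ENNReal.ofReal_coe_nnreal, lt_tsub_iff_right]

theorem setLIntegral_Ioi_eq_Ioo_add_Ioi (F : ℝ → ℝ≥0∞) {a c : ℝ} (hac : a ≤ c) :
    ∫⁻ l in Ioi a, F l = (∫⁻ l in Ioo a c, F l) + ∫⁻ l in Ioi c, F l := by
  rw [← Ioc_union_Ioi_eq_Ioi hac, lintegral_union measurableSet_Ioi Ioc_disjoint_Ioi_same,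
    restrict_Ioo_eq_restrict_Ioc]

theorem setLIntegral_rearrE_le (hh : Measurable h) (s : ℝ) (c : ℝ≥0) :
    ∫⁻ τ in Ioo 0 s, rearrE h τ ≤ ENNReal.ofReal s * c + ∫⁻ x, (h x - c) := by
  rw [setLIntegral_rearrE_eq_setLIntegral_min, setLIntegral_Ioi_eq_Ioo_add_Ioi _ c.coe_nonneg,
    ← setLIntegral_Ioi_volume_lt hh c]
  gcongr ?_ + ?_
  · calc _ ≤ ∫⁻ _ in Ioo 0 (c : ℝ), ENNReal.ofReal s := lintegral_mono fun _ => min_le_left _ _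
      _ = ENNReal.ofReal s * c := by
        rw [setLIntegral_const, Real.volume_Ioo, sub_zero, ENNReal.ofReal_coe_nnreal]
  · exact lintegral_mono fun _ => min_le_right _ _

theorem le_setLIntegral_rearrE (hh : Measurable h) {c : ℝ≥0} (hc : (c : ℝ≥0∞) = rearrE h s) :
    ENNReal.ofReal s * c + ∫⁻ x, (h x - c) ≤ ∫⁻ τ in Ioo 0 s, rearrE h τ := by
  rw [setLIntegral_rearrE_eq_setLIntegral_min, setLIntegral_Ioi_eq_Ioo_add_Ioi _ c.coe_nonneg,
    ← setLIntegral_Ioi_volume_lt hh c]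
  gcongr ?_ + ?_
  · refine le_of_eq ?_
    rw [setLIntegral_congr_fun measurableSet_Ioo fun l hl => min_eq_left ?_, setLIntegral_const,
      Real.volume_Ioo, sub_zero, ENNReal.ofReal_coe_nnreal]
    refine (lt_rearrE_iff.mp ?_).le
    rw [← hc, ← ENNReal.ofReal_coe_nnreal]
    exact (ENNReal.ofReal_lt_ofReal_iff (hl.1.trans hl.2)).mpr hl.2
  · refine setLIntegral_mono' measurableSet_Ioi fun l (hl : (c : ℝ) < l) => le_min ?_ le_rfl
    have hcl : (c : ℝ≥0∞) ≤ ENNReal.ofReal l := by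
      rw [← ENNReal.ofReal_coe_nnreal]
      exact ENNReal.ofReal_le_ofReal hl.le
    exact (rearrE_le_iff.mp hc.ge).trans' (measure_mono fun x hx => hcl.trans_lt hx)

theorem setLIntegral_rearrE_eq_iInf (hh : Measurable h) (hs : 0 < s) :
    ∫⁻ τ in Ioo 0 s, rearrE h τ = ⨅ c : ℝ≥0, ENNReal.ofReal s * c + ∫⁻ x, (h x - c) := by
  refine le_antisymm (le_iInf (setLIntegral_rearrE_le hh s)) ?_
  rcases eq_or_ne (rearrE h s) ∞ with htop | hfin
  · refine le_of_le_of_eq le_top (eq_top_iff.mpr ?_).symm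
    calc ∞ = ∫⁻ _ in Ioo 0 s, ∞ := by
          rw [setLIntegral_const, Real.volume_Ioo, sub_zero, top_mul (by simpa using hs)]
      _ ≤ ∫⁻ τ in Ioo 0 s, rearrE h τ :=
          setLIntegral_mono' measurableSet_Ioo fun τ hτ => htop ▸ rearrE_antitone h hτ.2.le
  · exact iInf_le_of_le _ (le_setLIntegral_rearrE hh (ENNReal.coe_toNNReal hfin))

theorem setLIntegral_rearrE_add_le (hh : Measurable h) (hh' : Measurable h') (hs : 0 < s) :
    ∫⁻ τ in Ioo 0 s, rearrE (h + h') τ ≤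
      (∫⁻ τ in Ioo 0 s, rearrE h τ) + ∫⁻ τ in Ioo 0 s, rearrE h' τ := by
  rw [setLIntegral_rearrE_eq_iInf hh hs, setLIntegral_rearrE_eq_iInf hh' hs]
  refine ENNReal.le_iInf_add_iInf fun c c' => ?_
  calc ∫⁻ τ in Ioo 0 s, rearrE (h + h') τ
      ≤ ENNReal.ofReal s * ↑(c + c') + ∫⁻ x, ((h + h') x - ↑(c + c')) :=
        setLIntegral_rearrE_le (hh.add hh') s _
    _ ≤ ENNReal.ofReal s * (c + c') + ∫⁻ x, ((h x - c) + (h' x - c')) := by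
        push_cast
        gcongr with x
        exact add_tsub_add_le_tsub_add_tsub
    _ = (ENNReal.ofReal s * c + ∫⁻ x, (h x - c)) +
          (ENNReal.ofReal s * c' + ∫⁻ x, (h' x - c')) := by
        rw [mul_add, lintegral_add_left (f := fun x => h x - c) (hh.sub measurable_const),
          add_add_add_comm]

/-- `h**(s) = (1/s) ∫₀ˢ h*(σ) dσ`. -/
noncomputable def avgRearrE (h : ℝ → ℝ≥0∞) (s : ℝ) : ℝ≥0∞ :=
  (ENNReal.ofReal s)⁻¹ * ∫⁻ σ in Ioo (0:ℝ) s, rearrE h σ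

theorem avgRearrE_mono (hh : h ≤ h') (s : ℝ) : avgRearrE h s ≤ avgRearrE h' s :=
  mul_le_mul_right (lintegral_mono fun σ => rearrE_mono hh σ) _

theorem avgRearrE_add_le (hh : Measurable h) (hh' : Measurable h') (hs : 0 < s) :
    avgRearrE (h + h') s ≤ avgRearrE h s + avgRearrE h' s := by
  rw [avgRearrE, avgRearrE, avgRearrE, ← mul_add]
  gcongr
  exact setLIntegral_rearrE_add_le hh hh' hs

theorem measurable_rearrE_uncurry {F : ℝ × ℝ → ℝ≥0∞} (hF : Measurable F) :
    Measurable fun p : ℝ × ℝ => rearrE (fun y => F (p.1, y)) p.2 := by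
  refine measurable_of_Ioi fun σ => ?_
  have hdist : Measurable fun x => volume {y | σ < F (x, y)} :=
    measurable_measure_prodMk_left (measurableSet_lt measurable_const hF)
  have : (fun p : ℝ × ℝ => rearrE (fun y => F (p.1, y)) p.2) ⁻¹' Ioi σ =
      {p | ENNReal.ofReal p.2 < volume {y | σ < F (p.1, y)}} := by
    ext p
    exact lt_rearrE_iff
  rw [this]
  exact measurableSet_lt measurable_snd.ennreal_ofReal (hdist.comp measurable_fst)

theorem measurable_avgRearrE_uncurry {F : ℝ × ℝ → ℝ≥0∞} (hF : Measurable F) (t : ℝ) :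
    Measurable fun x => avgRearrE (fun y => F (x, y)) t :=
  (measurable_rearrE_uncurry hF).lintegral_prod_right'.const_mul _

end Rearrangement

open Rearrangement

theorem starstarYX_eq_avgRearrE (f : ℝ × ℝ → ℝ) (s t : ℝ) :
    starstarYX f s t =
      avgRearrE (fun x => avgRearrE (fun y => ENNReal.ofReal |f (x, y)|) t) s :=
  rfl

/-- the operator `f ↦ f**_{yx}` is subadditive. -/
theorem starstarYX_subadditive (f g : ℝ × ℝ → ℝ) (hf : Measurable f) (hg : Measurable g) :
    ∀ s t : ℝ, 0 < s → 0 < t →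
      starstarYX (f + g) s t ≤ starstarYX f s t + starstarYX g s t := by
  intro s t hs ht
  have habs : ∀ {u : ℝ × ℝ → ℝ}, Measurable u → Measurable fun z => ENNReal.ofReal |u z| :=
    fun hu => hu.abs.ennreal_ofReal
  have hinner : ∀ x, avgRearrE (fun y => ENNReal.ofReal |(f + g) (x, y)|) t ≤
      avgRearrE (fun y => ENNReal.ofReal |f (x, y)|) t +
        avgRearrE (fun y => ENNReal.ofReal |g (x, y)|) t := fun x =>
    (avgRearrE_mono (fun y => (ENNReal.ofReal_le_ofReal (abs_add_le _ _)).trans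
        ENNReal.ofReal_add_le) t).trans
      (avgRearrE_add_le ((habs hf).comp measurable_prodMk_left)
        ((habs hg).comp measurable_prodMk_left) ht)
  simp only [starstarYX_eq_avgRearrE]
  exact (avgRearrE_mono hinner s).trans (avgRearrE_add_le
    (measurable_avgRearrE_uncurry (habs hf) t) (measurable_avgRearrE_uncurry (habs hg) t) hs)
end

section
/- Let f : ℝ² → ℝ be measurable. Then for all s, t > 0 one has f**_{yx}(s,t) ≤ f**(s,t). -/
open MeasureTheory ENNReal Set

/-!
Write `H x = ∫_0^t f*_y(x,τ) dτ`. Since `(c h)* = c h*`, after the normalising factors cancel the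
claim reads `∫_0^s H* ≤ ∫_0^t ∫_0^s (x ↦ f*_y(x,τ))*`, a Minkowski inequality for the functional
`h ↦ ∫_0^s h*`. It follows from the formula `∫_0^s h* = min_C (C s + ∫ (h - C)₊)`, the minimum
being attained at `C = h*(s)`: take `C = ∫_0^t f*_{yx}(s,τ) dτ` for `H`, use
`(H - C)₊ ≤ ∫_0^t (f*_y(·,τ) - f*_{yx}(s,τ))₊ dτ`, exchange the integrals and recognise the
minimum for each `τ`. The formula itself comes from the layer-cake representation
`∫_0^s h* = ∫_0^∞ min(s, |{h > λ}|) dλ`, split at `λ = C`.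
-/

open Function

theorem lt_rearrE_iff {h : ℝ → ℝ≥0∞} {t : ℝ} {l : ℝ≥0∞} :
    l < rearrE h t ↔ ENNReal.ofReal t < volume {x | l < h x} := by
  constructor
  · intro hl
    by_contra! hle
    exact hl.not_ge (sInf_le hle)
  · intro hlt
    have hl : l ≠ ∞ := by
      rintro rfl
      simp at hlt
    have hinv : ∀ n : ℕ, (n : ℝ≥0∞)⁻¹ ≠ 0 := fun n =>
      ENNReal.inv_ne_zero.2 (ENNReal.natCast_ne_top n)
    have hunion : {x | l < h x} = ⋃ n : ℕ, {x | l + (n : ℝ≥0∞)⁻¹ < h x} := by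
      ext x
      simp only [mem_ofPred_eq, mem_iUnion]
      constructor
      · intro hx
        obtain ⟨n, hn⟩ := ENNReal.exists_inv_nat_lt (tsub_pos_of_lt hx).ne'
        exact ⟨n, lt_tsub_iff_left.1 hn⟩
      · rintro ⟨n, hn⟩
        exact (ENNReal.lt_add_right hl (hinv n)).trans hn
    have hmono : Monotone fun n : ℕ => {x | l + (n : ℝ≥0∞)⁻¹ < h x} := fun m n hmn x hx =>
      lt_of_le_of_lt (add_le_add_right (ENNReal.inv_le_inv.2 (Nat.cast_le.2 hmn)) l) hx
    rw [hunion, hmono.measure_iUnion] at hlt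
    obtain ⟨n, hn⟩ := lt_iSup_iff.1 hlt
    refine (ENNReal.lt_add_right hl (hinv n)).trans_le (le_sInf fun σ hσ => ?_)
    by_contra! hσn
    exact (hn.trans_le (measure_mono fun x hx => hσn.trans hx)).not_ge hσ

theorem rearrE_antitone (h : ℝ → ℝ≥0∞) : Antitone (rearrE h) := fun _ _ hst =>
  sInf_le_sInf fun _ hσ => hσ.trans (ENNReal.ofReal_le_ofReal hst)

theorem measurable_rearrE {β : Type*} [MeasurableSpace β] {F : β → ℝ → ℝ≥0∞}
    (hF : Measurable (uncurry F)) : Measurable (uncurry fun b => rearrE (F b)) := by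
  refine measurable_of_Ioi fun l => ?_
  have hpre : uncurry (fun b => rearrE (F b)) ⁻¹' Ioi l =
      {p | ENNReal.ofReal p.2 < volume (Prod.mk p.1 ⁻¹' {q | l < uncurry F q})} := by
    ext p
    exact lt_rearrE_iff
  rw [hpre]
  exact measurableSet_lt (ENNReal.measurable_ofReal.comp measurable_snd)
    ((measurable_measure_prodMk_left (measurableSet_lt measurable_const hF)).comp measurable_fst)

theorem rearrE_const_mul (h : ℝ → ℝ≥0∞) {c : ℝ≥0∞} (hc0 : c ≠ 0) (hc : c ≠ ∞) (t : ℝ) :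
    rearrE (fun x => c * h x) t = c * rearrE h t := by
  refine eq_of_forall_lt_iff fun l => ?_
  have hdiv : ∀ a, l < c * a ↔ l / c < a := fun a => by
    rw [ENNReal.div_lt_iff (Or.inl hc0) (Or.inl hc), mul_comm]
  simp only [lt_rearrE_iff, hdiv]

theorem volume_pos_ofReal_lt (c : ℝ≥0∞) :
    volume {l : ℝ | 0 < l ∧ ENNReal.ofReal l < c} = c := by
  rcases eq_or_ne c ∞ with rfl | hc
  · have hset : {l : ℝ | 0 < l ∧ ENNReal.ofReal l < ∞} = Ioi 0 := by
      ext l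
      simp
    rw [hset, Real.volume_Ioi]
  · have hset : {l : ℝ | 0 < l ∧ ENNReal.ofReal l < c} = Ioo 0 c.toReal := by
      ext l
      exact and_congr_right fun hl => ENNReal.ofReal_lt_iff_lt_toReal hl.le hc
    rw [hset, Real.volume_Ioo, sub_zero, ENNReal.ofReal_toReal hc]

theorem measurableSet_pos_ofReal_lt (c : ℝ≥0∞) :
    MeasurableSet {l : ℝ | 0 < l ∧ ENNReal.ofReal l < c} :=
  measurableSet_Ioi.inter (measurableSet_lt ENNReal.measurable_ofReal measurable_const)

theorem measurableSet_pos_le_ofReal (c : ℝ≥0∞) :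
    MeasurableSet {l : ℝ | 0 < l ∧ c ≤ ENNReal.ofReal l} :=
  measurableSet_Ioi.inter (measurableSet_le measurable_const ENNReal.measurable_ofReal)

theorem setOf_pos_ofReal_lt_monotone :
    Monotone fun c : ℝ≥0∞ => {l : ℝ | 0 < l ∧ ENNReal.ofReal l < c} :=
  fun _ _ hab _ hl => ⟨hl.1, hl.2.trans_le hab⟩

theorem volume_pos_ofReal_mem_Ico (a b : ℝ≥0∞) :
    volume {l : ℝ | 0 < l ∧ ENNReal.ofReal l ∈ Ico a b} = b - a := by
  have hset : {l : ℝ | 0 < l ∧ ENNReal.ofReal l ∈ Ico a b} =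
      {l | 0 < l ∧ ENNReal.ofReal l < b} \ {l | 0 < l ∧ ENNReal.ofReal l < a} := by
    ext l
    simp only [mem_Ico, mem_sdiff, mem_ofPred_eq, not_and, not_lt]
    tauto
  rw [hset]
  rcases le_total b a with hba | hab
  · rw [sdiff_eq_empty.2 (setOf_pos_ofReal_lt_monotone hba), measure_empty,
      tsub_eq_zero_of_le hba]
  rcases eq_or_ne a ∞ with rfl | ha
  · rw [top_le_iff.1 hab, sdiff_self, measure_empty, tsub_self]
  rw [measure_sdiff (setOf_pos_ofReal_lt_monotone hab)
      (measurableSet_pos_ofReal_lt a).nullMeasurableSet (by rwa [volume_pos_ofReal_lt]),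
    volume_pos_ofReal_lt, volume_pos_ofReal_lt]

theorem lintegral_tsub_eq_setLIntegral_meas_lt {α : Type*} [MeasurableSpace α] (μ : Measure α)
    [SFinite μ] {h : α → ℝ≥0∞} (hh : Measurable h) (C : ℝ≥0∞) :
    ∫⁻ x, (h x - C) ∂μ =
      ∫⁻ l in {l : ℝ | 0 < l ∧ C ≤ ENNReal.ofReal l}, μ {x | ENNReal.ofReal l < h x} := by
  have hE : MeasurableSet {p : ℝ × α | ENNReal.ofReal p.1 < h p.2} :=
    measurableSet_lt (ENNReal.measurable_ofReal.comp measurable_fst) (hh.comp measurable_snd)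
  calc ∫⁻ x, (h x - C) ∂μ
      = ∫⁻ x, (volume.restrict {l : ℝ | 0 < l ∧ C ≤ ENNReal.ofReal l})
          {l | ENNReal.ofReal l < h x} ∂μ := by
        refine lintegral_congr fun x => ?_
        rw [Measure.restrict_apply (measurableSet_lt ENNReal.measurable_ofReal measurable_const),
          ← volume_pos_ofReal_mem_Ico]
        congr 1
        ext l
        simp only [mem_Ico, mem_inter_iff, mem_ofPred_eq]
        tauto
    _ = ((volume.restrict {l : ℝ | 0 < l ∧ C ≤ ENNReal.ofReal l}).prod μ)
          {p | ENNReal.ofReal p.1 < h p.2} := (Measure.prod_apply_symm hE).symm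
    _ = _ := Measure.prod_apply hE

theorem lintegral_Ioo_rearrE (h : ℝ → ℝ≥0∞) (s : ℝ) :
    ∫⁻ σ in Ioo 0 s, rearrE h σ =
      ∫⁻ l in Ioi 0, min (ENNReal.ofReal s) (volume {x | ENNReal.ofReal l < h x}) := by
  have hm := (rearrE_antitone h).measurable
  have hcake := lintegral_tsub_eq_setLIntegral_meas_lt (volume.restrict (Ioo 0 s)) hm 0
  simp only [tsub_zero, zero_le, and_true] at hcake
  rw [hcake]
  refine lintegral_congr fun l => ?_
  rw [Measure.restrict_apply (measurableSet_lt measurable_const hm),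
    ← volume_pos_ofReal_lt (min (ENNReal.ofReal s) _)]
  congr 1
  ext σ
  simp only [mem_inter_iff, mem_ofPred_eq, mem_Ioo, lt_rearrE_iff, lt_min_iff]
  constructor
  · rintro ⟨hd, hσ, hσs⟩
    exact ⟨hσ, (ENNReal.ofReal_lt_ofReal_iff_of_nonneg hσ.le).2 hσs, hd⟩
  · rintro ⟨hσ, hσs, hd⟩
    exact ⟨hd, hσ, (ENNReal.ofReal_lt_ofReal_iff_of_nonneg hσ.le).1 hσs⟩

theorem setLIntegral_Ioi_eq_add (F : ℝ → ℝ≥0∞) (C : ℝ≥0∞) :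
    ∫⁻ l in Ioi 0, F l =
      (∫⁻ l in {l : ℝ | 0 < l ∧ ENNReal.ofReal l < C}, F l) +
        ∫⁻ l in {l : ℝ | 0 < l ∧ C ≤ ENNReal.ofReal l}, F l := by
  have hsplit : Ioi (0 : ℝ) =
      {l | 0 < l ∧ ENNReal.ofReal l < C} ∪ {l | 0 < l ∧ C ≤ ENNReal.ofReal l} := by
    ext l
    exact ⟨fun hl => (lt_or_ge _ C).imp (⟨hl, ·⟩) (⟨hl, ·⟩), by rintro (hl | hl) <;> exact hl.1⟩
  rw [hsplit, lintegral_union (measurableSet_pos_le_ofReal C)]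
  exact Set.disjoint_left.2 fun l hl hl' => hl.2.not_ge hl'.2

theorem lintegral_Ioo_rearrE_eq_add (h : ℝ → ℝ≥0∞) (s : ℝ) (C : ℝ≥0∞) :
    ∫⁻ σ in Ioo 0 s, rearrE h σ =
      (∫⁻ l in {l : ℝ | 0 < l ∧ ENNReal.ofReal l < C},
          min (ENNReal.ofReal s) (volume {x | ENNReal.ofReal l < h x})) +
        ∫⁻ l in {l : ℝ | 0 < l ∧ C ≤ ENNReal.ofReal l},
          min (ENNReal.ofReal s) (volume {x | ENNReal.ofReal l < h x}) := by
  rw [lintegral_Ioo_rearrE, setLIntegral_Ioi_eq_add]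

theorem mul_add_lintegral_tsub_eq_add {h : ℝ → ℝ≥0∞} (hh : Measurable h) (s : ℝ) (C : ℝ≥0∞) :
    C * ENNReal.ofReal s + ∫⁻ x, (h x - C) =
      (∫⁻ _ in {l : ℝ | 0 < l ∧ ENNReal.ofReal l < C}, ENNReal.ofReal s) +
        ∫⁻ l in {l : ℝ | 0 < l ∧ C ≤ ENNReal.ofReal l}, volume {x | ENNReal.ofReal l < h x} := by
  rw [setLIntegral_const, volume_pos_ofReal_lt, mul_comm,
    lintegral_tsub_eq_setLIntegral_meas_lt volume hh]

theorem lintegral_Ioo_rearrE_le {h : ℝ → ℝ≥0∞} (hh : Measurable h) (s : ℝ) (C : ℝ≥0∞) :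
    ∫⁻ σ in Ioo 0 s, rearrE h σ ≤ C * ENNReal.ofReal s + ∫⁻ x, (h x - C) := by
  rw [lintegral_Ioo_rearrE_eq_add h s C, mul_add_lintegral_tsub_eq_add hh]
  exact add_le_add (lintegral_mono fun _ => min_le_left _ _)
    (lintegral_mono fun _ => min_le_right _ _)

theorem lintegral_Ioo_rearrE_eq {h : ℝ → ℝ≥0∞} (hh : Measurable h) (s : ℝ) :
    ∫⁻ σ in Ioo 0 s, rearrE h σ =
      rearrE h s * ENNReal.ofReal s + ∫⁻ x, (h x - rearrE h s) := by
  rw [lintegral_Ioo_rearrE_eq_add h s (rearrE h s), mul_add_lintegral_tsub_eq_add hh]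
  congr 1
  · refine setLIntegral_congr_fun (measurableSet_pos_ofReal_lt _) fun l hl => ?_
    exact min_eq_left (lt_rearrE_iff.1 hl.2).le
  · refine setLIntegral_congr_fun (measurableSet_pos_le_ofReal _) fun l hl => ?_
    exact min_eq_right (not_lt.1 fun hlt => hl.2.not_gt (lt_rearrE_iff.2 hlt))

theorem lintegral_Ioo_rearrE_lintegral_le {β : Type*} [MeasurableSpace β] {ν : Measure β}
    [SFinite ν] {G : β → ℝ → ℝ≥0∞} (hG : Measurable (uncurry G)) (s : ℝ) :
    ∫⁻ σ in Ioo 0 s, rearrE (fun x => ∫⁻ b, G b x ∂ν) σ ≤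
      ∫⁻ b, (∫⁻ σ in Ioo 0 s, rearrE (G b) σ) ∂ν := by
  set c : β → ℝ≥0∞ := fun b => rearrE (G b) s
  have hc : Measurable c := (measurable_rearrE hG).comp (measurable_id.prodMk measurable_const)
  have hGc : Measurable (uncurry fun x b => G b x - c b) :=
    (hG.comp measurable_swap).sub (hc.comp measurable_snd)
  calc ∫⁻ σ in Ioo 0 s, rearrE (fun x => ∫⁻ b, G b x ∂ν) σ
      ≤ (∫⁻ b, c b ∂ν) * ENNReal.ofReal s + ∫⁻ x, (∫⁻ b, G b x ∂ν - ∫⁻ b, c b ∂ν) :=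
        lintegral_Ioo_rearrE_le (hG.comp measurable_swap).lintegral_prod_right' s _
    _ ≤ (∫⁻ b, c b ∂ν) * ENNReal.ofReal s + ∫⁻ x, ∫⁻ b, (G b x - c b) ∂ν := by
        gcongr with x
        exact lintegral_sub_le' _ _ hc.aemeasurable
    _ = ∫⁻ b, (c b * ENNReal.ofReal s + ∫⁻ x, (G b x - c b)) ∂ν := by
        rw [lintegral_lintegral_swap hGc.aemeasurable, lintegral_add_left (hc.mul_const _),
          lintegral_mul_const _ hc]
    _ = ∫⁻ b, (∫⁻ σ in Ioo 0 s, rearrE (G b) σ) ∂ν := by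
        simp only [c, lintegral_Ioo_rearrE_eq hG.of_uncurry_left]

/-- `f**_{yx}(s,t) ≤ f**(s,t)`. -/
theorem starstarYX_le_starstar (f : ℝ × ℝ → ℝ) (hf : Measurable f) :
    ∀ s t : ℝ, 0 < s → 0 < t → starstarYX f s t ≤ starstar f s t := by
  intro s t hs ht
  have hY : Measurable (uncurry fun τ x => rearrY f x τ) := by
    have hY' : Measurable (uncurry (rearrY f)) :=
      measurable_rearrE (F := fun x y => ENNReal.ofReal |f (x, y)|) hf.abs.ennreal_ofReal
    exact measurable_swap_iff.2 hY'
  have hYX : Measurable (uncurry fun σ τ => rearrYX f σ τ) := by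
    have hYX' : Measurable (uncurry fun τ σ => rearrYX f σ τ) := measurable_rearrE hY
    exact measurable_swap_iff.2 hYX'
  have ht_inv : (ENNReal.ofReal t)⁻¹ ≠ ∞ := ENNReal.inv_ne_top.2 (ENNReal.ofReal_pos.2 ht).ne'
  calc starstarYX f s t
      = (ENNReal.ofReal s)⁻¹ * ((ENNReal.ofReal t)⁻¹ *
          ∫⁻ σ in Ioo 0 s, rearrE (fun x => ∫⁻ τ in Ioo 0 t, rearrY f x τ) σ) := by
        simp only [starstarYX, rearrE_const_mul _ (ENNReal.inv_ne_zero.2 ENNReal.ofReal_ne_top)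
          ht_inv, lintegral_const_mul' _ _ ht_inv]
    _ ≤ (ENNReal.ofReal s)⁻¹ * ((ENNReal.ofReal t)⁻¹ *
          ∫⁻ τ in Ioo 0 t, ∫⁻ σ in Ioo 0 s, rearrYX f σ τ) := by
        gcongr _ * (_ * ?_)
        exact lintegral_Ioo_rearrE_lintegral_le (ν := volume.restrict (Ioo 0 t)) hY s
    _ = starstar f s t := by
        rw [starstar, lintegral_lintegral_swap hYX.aemeasurable, ENNReal.ofReal_mul hs.le,
          ENNReal.mul_inv (Or.inl (ENNReal.ofReal_pos.2 hs).ne') (Or.inl ENNReal.ofReal_ne_top),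
          mul_assoc]
end

section
/- Let 0 < p < ∞, u = χ_{[0,1]} and v ≡ 1. Then there exists a measurable function f : ℝ² → ℝ (namely f(x,y) = (1+k)^{-1/p} for k ≤ x < k+1, 0 < y < k+1, k = 0,1,2,..., and f = 0 otherwise) such that ‖f‖_{Λ^p(u)[Λ^p(v)]} = 1 while ‖f‖_{Λ₂^p(uv)} = ∞. In particular, Λ^p(u)[Λ^p(v)] is not contained in Λ₂^p(uv). -/
open MeasureTheory ENNReal Set

/-! Take `f(x,y) = (1+x)^{-1/p}` on `{x > 0, 0 < y < 1+x}`, a variant of the paper's step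
function `(1+k)^{-1/p}`. Every slice `y ↦ f(x,y)` with `x > 0` has `L^p` norm exactly `1`, so
the inner quasinorms form the constant `1` on `x > 0`, whose rearrangement is `1`, and the mixed
norm is `1`. On the other hand, for `t ≥ 1` we have `f*_y(x,t) = (1+x)^{-1/p} ≥ (3t)^{-1/p}`
on the interval `t - 1 < x < t + 1` of length `2`, so `f*_{yx}(s,t)^p ≥ 1/(3t)` for `s < 2`,
and the integral in `t` diverges like `∫ dt/t`. -/

lemma rearrE_indicator_const (A : Set ℝ) (c : ℝ≥0∞) (t : ℝ) :
    rearrE (A.indicator fun _ => c) t = if ENNReal.ofReal t < volume A then c else 0 := by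
  have hsets : ∀ σ, {x | σ < A.indicator (fun _ => c) x} = if σ < c then A else ∅ := by
    intro σ
    ext x
    by_cases hx : x ∈ A <;> by_cases hσ : σ < c <;> simp [hx, hσ]
  unfold rearrE
  simp only [hsets]
  split_ifs with hA
  · refine le_antisymm (sInf_le (by simp)) (le_sInf fun σ hσ => ?_)
    by_contra! hσc
    have hAt : volume A ≤ ENNReal.ofReal t := by simpa [hσc] using hσ
    exact hAt.not_gt hA
  · refine le_antisymm (sInf_le ?_) bot_le
    by_cases hc : 0 < c <;> simp [hc, not_lt.1 hA]

lemma le_rearrE {h : ℝ → ℝ≥0∞} {A : Set ℝ} {c : ℝ≥0∞} {t : ℝ}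
    (hA : ENNReal.ofReal t < volume A) (hc : ∀ x ∈ A, c ≤ h x) : c ≤ rearrE h t := by
  refine le_sInf fun σ hσ => ?_
  by_contra! hσc
  have hsub : A ⊆ {x | σ < h x} := fun x hx => hσc.trans_le (hc x hx)
  exact (hA.trans_le ((measure_mono hsub).trans hσ)).false

lemma lintegral_Ioi_inv_eq_top (a : ℝ) : ∫⁻ t in Ioi a, ENNReal.ofReal t⁻¹ = ∞ := by
  refine eq_top_iff.2 (le_trans ?_ (lintegral_mono_set (Ioi_subset_Ioi (le_max_left a 0))))
  by_contra! h
  refine not_integrableOn_Ioi_inv ((lintegral_ofReal_ne_top_iff_integrable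
    measurable_inv.aestronglyMeasurable ?_).1 h.ne)
  filter_upwards [ae_restrict_mem measurableSet_Ioi] with t ht
  exact inv_nonneg.2 ((le_max_right a 0).trans ht.le)

lemma ofReal_rpow_neg_one_div_rpow {a p : ℝ} (ha : 0 < a) (hp : p ≠ 0) :
    ENNReal.ofReal (a ^ (-1 / p)) ^ p = ENNReal.ofReal a⁻¹ := by
  rw [ENNReal.ofReal_rpow_of_pos (Real.rpow_pos_of_pos ha _), ← Real.rpow_mul ha.le,
    div_mul_cancel₀ _ hp, Real.rpow_neg_one]

lemma ofReal_indicator_one (A : Set ℝ) (x : ℝ) :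
    ENNReal.ofReal (A.indicator (fun _ => (1:ℝ)) x) = A.indicator 1 x := by
  by_cases hx : x ∈ A <;> simp [hx]

noncomputable def counterexample (p : ℝ) : ℝ × ℝ → ℝ :=
  {z | 0 < z.1 ∧ 0 < z.2 ∧ z.2 < 1 + z.1}.indicator fun z => (1 + z.1) ^ (-1 / p)

lemma measurable_counterexample (p : ℝ) : Measurable (counterexample p) := by
  refine Measurable.indicator (by fun_prop) ?_
  exact (measurableSet_lt measurable_const measurable_fst).inter
    ((measurableSet_lt measurable_const measurable_snd).inter
      (measurableSet_lt measurable_snd (measurable_const.add measurable_fst)))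

lemma rearrY_counterexample (p x t : ℝ) :
    rearrY (counterexample p) x t =
      if 0 < x ∧ t < 1 + x then ENNReal.ofReal ((1 + x) ^ (-1 / p)) else 0 := by
  have hslice : (fun y => ENNReal.ofReal |counterexample p (x, y)|) =
      {y | 0 < x ∧ 0 < y ∧ y < 1 + x}.indicator
        fun _ => ENNReal.ofReal ((1 + x) ^ (-1 / p)) := by
    ext y
    by_cases hy : 0 < x ∧ 0 < y ∧ y < 1 + x
    · simp [counterexample, hy, abs_of_pos (Real.rpow_pos_of_pos (by linarith : 0 < 1 + x) _)]
    · simp [counterexample, hy]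
  rw [rearrY, rearr, hslice, rearrE_indicator_const]
  by_cases hx : 0 < x
  · have hset : {y | 0 < x ∧ 0 < y ∧ y < 1 + x} = Ioo 0 (1 + x) := by ext; simp [hx]
    simp only [hset, Real.volume_Ioo, sub_zero,
      ENNReal.ofReal_lt_ofReal_iff (by linarith : 0 < 1 + x)]
    simp [hx]
  · simp [hx]

lemma lintegral_rearrY_counterexample {p : ℝ} (hp : 0 < p) (x : ℝ) :
    ∫⁻ t in Ioi 0, rearrY (counterexample p) x t ^ p = (Ioi 0).indicator (fun _ => 1) x := by
  by_cases hx : 0 < x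
  · have h1x : 0 < 1 + x := by linarith
    have hpow : ∀ t, rearrY (counterexample p) x t ^ p =
        (Iio (1 + x)).indicator (fun _ => ENNReal.ofReal (1 + x)⁻¹) t := by
      intro t
      by_cases ht : t < 1 + x
      · simp [rearrY_counterexample, hx, ht, ofReal_rpow_neg_one_div_rpow h1x hp.ne']
      · simp [rearrY_counterexample, ht, ENNReal.zero_rpow_of_pos hp]
    simp only [hpow]
    rw [lintegral_indicator measurableSet_Iio, setLIntegral_const,
      Measure.restrict_apply measurableSet_Iio, Iio_inter_Ioi, Real.volume_Ioo, sub_zero,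
      ← ENNReal.ofReal_mul (inv_nonneg.2 h1x.le), inv_mul_cancel₀ h1x.ne']
    simp [hx]
  · simp [rearrY_counterexample, hx, ENNReal.zero_rpow_of_pos hp]

lemma rearrE_lintegral_rearrY_counterexample {p : ℝ} (hp : 0 < p) (s : ℝ) :
    rearrE (fun x => ∫⁻ t in Ioi 0, rearrY (counterexample p) x t ^ p) s = 1 := by
  simp_rw [lintegral_rearrY_counterexample hp, rearrE_indicator_const, Real.volume_Ioi]
  simp

lemma le_rearrYX_counterexample {p s t : ℝ} (hp : 0 ≤ p) (hs : s < 2) (ht : 1 ≤ t) :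
    ENNReal.ofReal ((3 * t) ^ (-1 / p)) ≤ rearrYX (counterexample p) s t := by
  refine le_rearrE (A := Ioo (t - 1) (t + 1)) ?_ fun x hx => ?_
  · rw [Real.volume_Ioo, ENNReal.ofReal_lt_ofReal_iff (by linarith)]
    linarith
  · rw [rearrY_counterexample, if_pos ⟨by linarith [hx.1], by linarith [hx.1]⟩]
    exact ENNReal.ofReal_le_ofReal (Real.rpow_le_rpow_of_nonpos (by linarith [hx.1])
      (by linarith [hx.2]) (div_nonpos_of_nonpos_of_nonneg (by norm_num) hp))

lemma lintegral_rearrYX_counterexample_eq_top {p s : ℝ} (hp : 0 < p) (hs : s < 2) :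
    ∫⁻ t in Ioi 0, rearrYX (counterexample p) s t ^ p = ∞ := by
  refine eq_top_iff.2 ?_
  calc ∞ = ENNReal.ofReal 3⁻¹ * ∫⁻ t in Ioi 1, ENNReal.ofReal t⁻¹ := by
        rw [lintegral_Ioi_inv_eq_top, ENNReal.mul_top (by norm_num)]
    _ = ∫⁻ t in Ioi 1, ENNReal.ofReal (3 * t)⁻¹ := by
        rw [← lintegral_const_mul' _ _ ENNReal.ofReal_ne_top]
        refine setLIntegral_congr_fun measurableSet_Ioi fun t ht => ?_
        rw [← ENNReal.ofReal_mul (by norm_num), mul_inv]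
    _ ≤ ∫⁻ t in Ioi 1, rearrYX (counterexample p) s t ^ p := by
        refine setLIntegral_mono' measurableSet_Ioi fun t ht => ?_
        rw [← ofReal_rpow_neg_one_div_rpow (by linarith [mem_Ioi.1 ht]) hp.ne']
        exact ENNReal.rpow_le_rpow (le_rearrYX_counterexample hp.le hs (le_of_lt ht)) hp.le
    _ ≤ ∫⁻ t in Ioi 0, rearrYX (counterexample p) s t ^ p :=
        lintegral_mono_set (Ioi_subset_Ioi zero_le_one)

lemma mixedNorm_counterexample {p : ℝ} (hp : 0 < p) :
    mixedNorm p ((Icc (0:ℝ) 1).indicator fun _ => 1) (fun _ => 1) (counterexample p) = 1 := by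
  simp only [mixedNorm, ENNReal.ofReal_one, mul_one, rearrE_lintegral_rearrY_counterexample hp,
    one_mul, ofReal_indicator_one]
  rw [restrict_Ioi_eq_restrict_Ici, lintegral_indicator_one measurableSet_Icc,
    Measure.restrict_apply measurableSet_Icc, inter_eq_left.2 Icc_subset_Ici_self,
    Real.volume_Icc, sub_zero, ENNReal.ofReal_one, ENNReal.one_rpow]

lemma lam2Norm_counterexample {p : ℝ} (hp : 0 < p) :
    lam2Norm p (fun z => (Icc (0:ℝ) 1).indicator (fun _ => 1) z.1 * 1) (counterexample p) =
      ∞ := by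
  have hinner : ∀ s ∈ Ioc (0:ℝ) 1,
      ∞ = ∫⁻ t in Ioi 0, rearrYX (counterexample p) s t ^ p *
        ENNReal.ofReal ((Icc (0:ℝ) 1).indicator (fun _ => 1) s * 1) := fun s hs => by
    simp [indicator_of_mem (Ioc_subset_Icc_self hs),
      lintegral_rearrYX_counterexample_eq_top hp (hs.2.trans_lt one_lt_two)]
  suffices h : ∫⁻ s in Ioi 0, ∫⁻ t in Ioi 0, rearrYX (counterexample p) s t ^ p *
      ENNReal.ofReal ((Icc (0:ℝ) 1).indicator (fun _ => 1) s * 1) = ∞ by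
    rw [lam2Norm, h, ENNReal.top_rpow_of_pos (by positivity)]
  refine eq_top_iff.2 ?_
  calc ∞ = ∫⁻ _ in Ioc (0:ℝ) 1, ∞ := by simp
    _ = _ := setLIntegral_congr_fun measurableSet_Ioc hinner
    _ ≤ _ := lintegral_mono_set Ioc_subset_Ioi_self

/-- with `u = χ_{[0,1]}` and `v ≡ 1`, there is a measurable `f` with
`‖f‖_{Λ^p(u)[Λ^p(v)]} = 1` and `‖f‖_{Λ₂^p(uv)} = ∞`; in particular
`Λ^p(u)[Λ^p(v)] ⊄ Λ₂^p(uv)`. -/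
theorem mixed_not_subset_lam2 (p : ℝ) (hp : 0 < p) :
    ∃ f : ℝ × ℝ → ℝ, Measurable f ∧
      mixedNorm p ((Icc (0:ℝ) 1).indicator fun _ => (1:ℝ)) (fun _ => (1:ℝ)) f = 1 ∧
      lam2Norm p (fun z => (Icc (0:ℝ) 1).indicator (fun _ => (1:ℝ)) z.1 * 1) f = ⊤ :=
  ⟨counterexample p, measurable_counterexample p, mixedNorm_counterexample hp,
    lam2Norm_counterexample hp⟩
end

section
/- Let u, v be weights on ℝ₊ such that 0 < ∫_0^a u(s) ds < ∞ and 0 < ∫_0^b v(t) dt < ∞ for all a, b > 0. Then sup over all nonempty decreasing sets D ⊂ ℝ²₊ of the quotient [∫_{ℝ²₊} S²(χ_D)(s,t) u(s)v(t) ds dt] / [∫_D u(s)v(t) ds dt] equals (1 + sup_{a>0} [a∫_a^∞ u(s)/s ds] / [∫_0^a u(s) ds]) · (1 + sup_{b>0} [b∫_b^∞ v(t)/t dt] / [∫_0^b v(t) dt]), as an identity in [0,∞]. -/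
open MeasureTheory ENNReal Set

/-!
Write `Q w (σ) = ∫_σ^∞ w(t)/t dt` for the dual Hardy operator. By Tonelli, `Q` is the adjoint of
the averaging operator `F ↦ (1/s)∫_0^s F`, so `∫ S²(χ_D) (u ⊗ v) = ∫_D Q u ⊗ Q v`. On an interval
`∫_0^b Q w = ∫_0^b w + b Q w(b)`, hence `∫_E Q w ≤ (1 + A) ∫_E w` for every initial segment `E` of
`(0, ∞)`, where `A = sup_b b Q w(b) / ∫_0^b w`. The sections of a decreasing set are such segments;
applying this in each variable gives the upper bound, and the rectangles `(0,a) × (0,b)` have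
quotient exactly `(1 + a Q u(a) / ∫_0^a u) (1 + b Q v(b) / ∫_0^b v)`, which gives the lower bound.
-/

noncomputable def dualHardy (w : ℝ → ℝ≥0∞) (σ : ℝ) : ℝ≥0∞ := ∫⁻ t in Ioi σ, w t / ENNReal.ofReal t

lemma antitone_dualHardy (w : ℝ → ℝ≥0∞) : Antitone (dualHardy w) :=
  fun _ _ h => lintegral_mono_set (Ioi_subset_Ioi h)

@[fun_prop]
lemma measurable_dualHardy (w : ℝ → ℝ≥0∞) : Measurable (dualHardy w) :=
  (antitone_dualHardy w).measurable

@[fun_prop]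
lemma measurable_setLIntegral_Ioo (F : ℝ → ℝ≥0∞) : Measurable fun t => ∫⁻ τ in Ioo 0 t, F τ :=
  Monotone.measurable fun _ _ h => lintegral_mono_set (Ioo_subset_Ioo_right h)

theorem lintegral_hardy_mul_eq_lintegral_mul_dualHardy {F w : ℝ → ℝ≥0∞} (hF : Measurable F)
    (hw : Measurable w) :
    ∫⁻ s in Ioi 0, (∫⁻ σ in Ioo 0 s, F σ) * (w s / ENNReal.ofReal s) =
      ∫⁻ σ in Ioi 0, F σ * dualHardy w σ := by
  set k : ℝ → ℝ → ℝ≥0∞ := fun s σ => if σ < s then F σ * (w s / ENNReal.ofReal s) else 0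
  have hk : Measurable (Function.uncurry k) :=
    Measurable.ite (measurableSet_lt measurable_snd measurable_fst) (by fun_prop) measurable_const
  have inner_s (s : ℝ) : (∫⁻ σ in Ioo 0 s, F σ) * (w s / ENNReal.ofReal s) =
      ∫⁻ σ in Ioi 0, k s σ := by
    have : k s = (Iio s).indicator fun σ => F σ * (w s / ENNReal.ofReal s) := by
      ext σ; simp [k, indicator_apply]
    rw [this, lintegral_indicator measurableSet_Iio, Measure.restrict_restrict measurableSet_Iio,
      Iio_inter_Ioi, lintegral_mul_const _ hF]
  have inner_σ {σ : ℝ} (hσ : 0 < σ) : ∫⁻ s in Ioi 0, k s σ = F σ * dualHardy w σ := by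
    have : (fun s => k s σ) = (Ioi σ).indicator fun s => F σ * (w s / ENNReal.ofReal s) := by
      ext s; simp [k, indicator_apply]
    rw [this, lintegral_indicator measurableSet_Ioi, Measure.restrict_restrict measurableSet_Ioi,
      inter_eq_left.2 (Ioi_subset_Ioi hσ.le), dualHardy, lintegral_const_mul _ (by fun_prop)]
  simp_rw [inner_s]
  rw [lintegral_lintegral_swap hk.aemeasurable]
  exact setLIntegral_congr_fun measurableSet_Ioi fun σ hσ => inner_σ hσ

lemma ofReal_mul_div_ofReal_cancel (w : ℝ≥0∞) {s : ℝ} (hs : 0 < s) :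
    ENNReal.ofReal s * (w / ENNReal.ofReal s) = w :=
  ENNReal.mul_div_cancel (by simpa using hs) ENNReal.ofReal_ne_top

lemma setLIntegral_Ioi_dualHardy {w : ℝ → ℝ≥0∞} (hw : Measurable w) :
    ∫⁻ σ in Ioi 0, dualHardy w σ = ∫⁻ s in Ioi 0, w s := by
  have h := lintegral_hardy_mul_eq_lintegral_mul_dualHardy (F := 1) measurable_const hw
  simp only [Pi.one_apply, lintegral_const, Measure.restrict_apply MeasurableSet.univ, univ_inter,
    Real.volume_Ioo, sub_zero, one_mul] at h
  rw [← h]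
  exact setLIntegral_congr_fun measurableSet_Ioi fun s hs => ofReal_mul_div_ofReal_cancel _ hs

lemma setLIntegral_Ioo_dualHardy {w : ℝ → ℝ≥0∞} (hw : Measurable w) {b : ℝ} (hb : 0 < b) :
    ∫⁻ σ in Ioo 0 b, dualHardy w σ = (∫⁻ s in Ioo 0 b, w s) + ENNReal.ofReal b * dualHardy w b := by
  have h := lintegral_hardy_mul_eq_lintegral_mul_dualHardy
    (measurable_one.indicator (measurableSet_Ioo (a := 0) (b := b))) hw
  have hvol (s : ℝ) : ∫⁻ σ in Ioo 0 s, (Ioo 0 b).indicator 1 σ = ENNReal.ofReal (min b s) := by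
    rw [lintegral_indicator_one measurableSet_Ioo, Measure.restrict_apply measurableSet_Ioo,
      Ioo_inter_Ioo, max_self, Real.volume_Ioo, sub_zero]
  have hmul (σ : ℝ) : (Ioo 0 b).indicator 1 σ * dualHardy w σ =
      (Ioo 0 b).indicator (dualHardy w) σ := by
    by_cases hσ : σ ∈ Ioo 0 b <;> simp [hσ]
  have below : ∫⁻ s in Ioc 0 b, ENNReal.ofReal (min b s) * (w s / ENNReal.ofReal s) =
      ∫⁻ s in Ioo 0 b, w s := by
    rw [setLIntegral_congr Ioo_ae_eq_Ioc.symm]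
    refine setLIntegral_congr_fun measurableSet_Ioo fun s hs => ?_
    rw [min_eq_right hs.2.le, ofReal_mul_div_ofReal_cancel _ hs.1]
  have above : ∫⁻ s in Ioi b, ENNReal.ofReal (min b s) * (w s / ENNReal.ofReal s) =
      ENNReal.ofReal b * dualHardy w b := by
    rw [dualHardy, ← lintegral_const_mul _ (by fun_prop)]
    exact setLIntegral_congr_fun measurableSet_Ioi fun s hs => by rw [min_eq_left hs.le]
  simp only [hvol, hmul, setLIntegral_indicator measurableSet_Ioo,
    inter_eq_left.2 Ioo_subset_Ioi_self] at h
  rw [← h, ← Ioc_union_Ioi_eq_Ioi hb.le, lintegral_union measurableSet_Ioi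
    (Ioc_disjoint_Ioi le_rfl), below, above]

lemma setLIntegral_dualHardy_le {w : ℝ → ℝ≥0∞} (hw : Measurable w) {A : ℝ≥0∞}
    (hA : ∀ b, 0 < b → ENNReal.ofReal b * dualHardy w b ≤ A * ∫⁻ s in Ioo 0 b, w s)
    {E : Set ℝ} (hE : E ⊆ Ioi 0) (hE_dec : ∀ x ∈ E, ∀ y, 0 < y → y ≤ x → y ∈ E) :
    ∫⁻ σ in E, dualHardy w σ ≤ (1 + A) * ∫⁻ σ in E, w σ := by
  rcases E.eq_empty_or_nonempty with rfl | ⟨x, hx⟩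
  · simp
  by_cases hbdd : BddAbove E
  · set b := sSup E
    have hb : 0 < b := (hE hx).trans_le (le_csSup hbdd hx)
    have hIoo : Ioo 0 b ⊆ E := fun y hy => by
      obtain ⟨e, he, hye⟩ := exists_lt_of_lt_csSup ⟨x, hx⟩ hy.2
      exact hE_dec e he y hy.1 hye.le
    have hIoc : E ⊆ Ioc 0 b := fun y hy => ⟨hE hy, le_csSup hbdd hy⟩
    have hE_Ioo (f : ℝ → ℝ≥0∞) : ∫⁻ σ in E, f σ = ∫⁻ σ in Ioo 0 b, f σ :=
      le_antisymm ((lintegral_mono_set hIoc).trans_eq (setLIntegral_congr Ioo_ae_eq_Ioc).symm)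
        (lintegral_mono_set hIoo)
    rw [hE_Ioo, hE_Ioo, setLIntegral_Ioo_dualHardy hw hb, add_mul, one_mul]
    exact add_le_add_right (hA b hb) _
  · have hE_Ioi : E = Ioi 0 := hE.antisymm fun y hy => by
      obtain ⟨e, he, hye⟩ := not_bddAbove_iff.1 hbdd y
      exact hE_dec e he y hy hye.le
    rw [hE_Ioi, setLIntegral_Ioi_dualHardy hw]
    exact le_mul_of_one_le_left' le_self_add

lemma setLIntegral_mul_eq_lintegral_setLIntegral_preimage {α β : Type*} [MeasurableSpace α]
    [MeasurableSpace β] {μ : Measure α} {ν : Measure β} [SFinite ν] {f : α → ℝ≥0∞}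
    {g : β → ℝ≥0∞} (hf : Measurable f) (hg : Measurable g) {D : Set (α × β)}
    (hD : MeasurableSet D) :
    ∫⁻ z in D, f z.1 * g z.2 ∂μ.prod ν = ∫⁻ x, f x * ∫⁻ y in Prod.mk x ⁻¹' D, g y ∂ν ∂μ := by
  rw [← lintegral_indicator hD, lintegral_prod _ ((by fun_prop : Measurable fun z : α × β =>
    f z.1 * g z.2).indicator hD).aemeasurable]
  congr 1 with x
  rw [← lintegral_const_mul _ hg, ← lintegral_indicator (measurable_prodMk_left hD)]
  congr 1 with y

lemma DecreasingSet.preimage_swap {D : Set (ℝ × ℝ)} (hD : DecreasingSet D) :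
    DecreasingSet (Prod.swap ⁻¹' D) :=
  ⟨hD.1.preimage measurable_swap, fun _ hz => ⟨(hD.2.1 hz).2, (hD.2.1 hz).1⟩,
    fun _ _ _ _ hz hs' hs't ht' ht't => hD.2.2 _ _ _ _ hz ht' ht't hs' hs't⟩

lemma setLIntegral_preimage_swap (F : ℝ × ℝ → ℝ≥0∞) (D : Set (ℝ × ℝ)) :
    ∫⁻ z in Prod.swap ⁻¹' D, F z.swap = ∫⁻ z in D, F z :=
  Measure.measurePreserving_swap.setLIntegral_comp_preimage_emb
    MeasurableEquiv.prodComm.measurableEmbedding F D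

lemma setLIntegral_mul_dualHardy_le {f w : ℝ → ℝ≥0∞} (hf : Measurable f) (hw : Measurable w)
    {A : ℝ≥0∞} (hA : ∀ b, 0 < b → ENNReal.ofReal b * dualHardy w b ≤ A * ∫⁻ s in Ioo 0 b, w s)
    {D : Set (ℝ × ℝ)} (hD : DecreasingSet D) :
    ∫⁻ z in D, f z.1 * dualHardy w z.2 ≤ (1 + A) * ∫⁻ z in D, f z.1 * w z.2 := by
  have hsection (σ : ℝ) := setLIntegral_dualHardy_le hw hA (E := Prod.mk σ ⁻¹' D)
    (fun _ hτ => (hD.2.1 hτ).2) fun _ hτ _ hy hyτ => hD.2.2 _ _ _ _ hτ (hD.2.1 hτ).1 le_rfl hy hyτ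
  calc ∫⁻ z in D, f z.1 * dualHardy w z.2
      = ∫⁻ σ, f σ * ∫⁻ τ in Prod.mk σ ⁻¹' D, dualHardy w τ :=
        setLIntegral_mul_eq_lintegral_setLIntegral_preimage hf (measurable_dualHardy w) hD.1
    _ ≤ ∫⁻ σ, f σ * ((1 + A) * ∫⁻ τ in Prod.mk σ ⁻¹' D, w τ) :=
        lintegral_mono fun σ => by gcongr; exact hsection σ
    _ = ∫⁻ z in D, f z.1 * ((1 + A) * w z.2) := by
        rw [Measure.volume_eq_prod,
          setLIntegral_mul_eq_lintegral_setLIntegral_preimage hf (hw.const_mul _) hD.1]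
        simp_rw [lintegral_const_mul _ hw]
    _ = (1 + A) * ∫⁻ z in D, f z.1 * w z.2 := by
        rw [← lintegral_const_mul _ (by fun_prop)]
        simp_rw [mul_left_comm]

lemma setLIntegral_dualHardy_mul_dualHardy_le {w₁ w₂ : ℝ → ℝ≥0∞} (hw₁ : Measurable w₁)
    (hw₂ : Measurable w₂) {A B : ℝ≥0∞}
    (hA : ∀ a, 0 < a → ENNReal.ofReal a * dualHardy w₁ a ≤ A * ∫⁻ s in Ioo 0 a, w₁ s)
    (hB : ∀ b, 0 < b → ENNReal.ofReal b * dualHardy w₂ b ≤ B * ∫⁻ t in Ioo 0 b, w₂ t)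
    {D : Set (ℝ × ℝ)} (hD : DecreasingSet D) :
    ∫⁻ z in D, dualHardy w₁ z.1 * dualHardy w₂ z.2 ≤
      (1 + A) * (1 + B) * ∫⁻ z in D, w₁ z.1 * w₂ z.2 := by
  have hswap (f g : ℝ → ℝ≥0∞) :
      ∫⁻ z in D, f z.1 * g z.2 = ∫⁻ z in Prod.swap ⁻¹' D, g z.1 * f z.2 := by
    rw [← setLIntegral_preimage_swap]
    simp_rw [Prod.fst_swap, Prod.snd_swap, mul_comm]
  calc ∫⁻ z in D, dualHardy w₁ z.1 * dualHardy w₂ z.2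
      ≤ (1 + B) * ∫⁻ z in D, dualHardy w₁ z.1 * w₂ z.2 :=
        setLIntegral_mul_dualHardy_le (measurable_dualHardy w₁) hw₂ hB hD
    _ ≤ (1 + B) * ((1 + A) * ∫⁻ z in Prod.swap ⁻¹' D, w₂ z.1 * w₁ z.2) := by
        rw [hswap]
        gcongr
        exact setLIntegral_mul_dualHardy_le hw₂ hw₁ hA hD.preimage_swap
    _ = (1 + A) * (1 + B) * ∫⁻ z in D, w₁ z.1 * w₂ z.2 := by
        rw [hswap w₁ w₂]; ring

lemma S2E_mul_eq {g : ℝ × ℝ → ℝ≥0∞} (hg : Measurable g) (w₁ w₂ : ℝ → ℝ≥0∞) {s t : ℝ}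
    (hs : 0 < s) :
    S2E g s t * (w₁ s * w₂ t) = w₁ s / ENNReal.ofReal s *
      ((∫⁻ τ in Ioo 0 t, ∫⁻ σ in Ioo 0 s, g (σ, τ)) * (w₂ t / ENNReal.ofReal t)) := by
  rw [S2E, lintegral_lintegral_swap (f := fun σ τ => g (σ, τ)) hg.aemeasurable,
    ENNReal.ofReal_mul hs.le,
    ENNReal.mul_inv (Or.inr ENNReal.ofReal_ne_top) (Or.inl ENNReal.ofReal_ne_top),
    div_eq_mul_inv, div_eq_mul_inv]
  ring

theorem lintegral_S2E_mul_eq_lintegral_mul_dualHardy {g : ℝ × ℝ → ℝ≥0∞} (hg : Measurable g)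
    {w₁ w₂ : ℝ → ℝ≥0∞} (hw₁ : Measurable w₁) (hw₂ : Measurable w₂) :
    ∫⁻ s in Ioi 0, ∫⁻ t in Ioi 0, S2E g s t * (w₁ s * w₂ t) =
      ∫⁻ σ in Ioi 0, ∫⁻ τ in Ioi 0, g (σ, τ) * (dualHardy w₁ σ * dualHardy w₂ τ) := by
  have inner (s : ℝ) : ∫⁻ τ in Ioi 0, (∫⁻ σ in Ioo 0 s, g (σ, τ)) * dualHardy w₂ τ =
      ∫⁻ σ in Ioo 0 s, ∫⁻ τ in Ioi 0, g (σ, τ) * dualHardy w₂ τ := by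
    have (τ : ℝ) : (∫⁻ σ in Ioo 0 s, g (σ, τ)) * dualHardy w₂ τ =
        ∫⁻ σ in Ioo 0 s, g (σ, τ) * dualHardy w₂ τ := (lintegral_mul_const _ (by fun_prop)).symm
    simp_rw [this]
    exact lintegral_lintegral_swap (f := fun τ σ => g (σ, τ) * dualHardy w₂ τ) (by fun_prop)
  calc ∫⁻ s in Ioi 0, ∫⁻ t in Ioi 0, S2E g s t * (w₁ s * w₂ t)
      = ∫⁻ s in Ioi 0, (∫⁻ σ in Ioo 0 s, ∫⁻ τ in Ioi 0, g (σ, τ) * dualHardy w₂ τ) *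
          (w₁ s / ENNReal.ofReal s) := by
        refine setLIntegral_congr_fun measurableSet_Ioi fun s hs => ?_
        simp_rw [S2E_mul_eq hg w₁ w₂ hs]
        rw [lintegral_const_mul _ (by fun_prop),
          lintegral_hardy_mul_eq_lintegral_mul_dualHardy hg.lintegral_prod_left' hw₂, inner,
          mul_comm]
    _ = ∫⁻ σ in Ioi 0, (∫⁻ τ in Ioi 0, g (σ, τ) * dualHardy w₂ τ) * dualHardy w₁ σ :=
        lintegral_hardy_mul_eq_lintegral_mul_dualHardy
          (hg.mul ((measurable_dualHardy w₂).comp measurable_snd)).lintegral_prod_right' hw₁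
    _ = ∫⁻ σ in Ioi 0, ∫⁻ τ in Ioi 0, g (σ, τ) * (dualHardy w₁ σ * dualHardy w₂ τ) := by
        refine lintegral_congr fun σ => ?_
        rw [← lintegral_mul_const _ (by fun_prop)]
        simp_rw [mul_comm (dualHardy w₁ σ), mul_assoc]

lemma lintegral_S2E_indicator_mul_eq {D : Set (ℝ × ℝ)} (hD : MeasurableSet D)
    (hD_pos : D ⊆ Ioi 0 ×ˢ Ioi 0) {w₁ w₂ : ℝ → ℝ≥0∞} (hw₁ : Measurable w₁)
    (hw₂ : Measurable w₂) :
    ∫⁻ s in Ioi 0, ∫⁻ t in Ioi 0, S2E (D.indicator fun _ => 1) s t * (w₁ s * w₂ t) =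
      ∫⁻ z in D, dualHardy w₁ z.1 * dualHardy w₂ z.2 := by
  have hind : Measurable (D.indicator fun _ => (1 : ℝ≥0∞)) := measurable_const.indicator hD
  rw [lintegral_S2E_mul_eq_lintegral_mul_dualHardy hind hw₁ hw₂, ← lintegral_prod (fun z =>
      D.indicator (fun _ => 1) z * (dualHardy w₁ z.1 * dualHardy w₂ z.2))
      (hind.mul (by fun_prop)).aemeasurable, Measure.prod_restrict, ← Measure.volume_eq_prod]
  have (z : ℝ × ℝ) : D.indicator (fun _ => 1) z * (dualHardy w₁ z.1 * dualHardy w₂ z.2) =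
      D.indicator (fun z => dualHardy w₁ z.1 * dualHardy w₂ z.2) z := by
    by_cases hz : z ∈ D <;> simp [hz]
  simp_rw [this]
  rw [setLIntegral_indicator hD, inter_eq_left.2 hD_pos]

lemma setLIntegral_prod_mul_eq {f g : ℝ → ℝ≥0∞} (hf : Measurable f) (hg : Measurable g)
    (S T : Set ℝ) : ∫⁻ z in S ×ˢ T, f z.1 * g z.2 = (∫⁻ s in S, f s) * ∫⁻ t in T, g t := by
  rw [Measure.volume_eq_prod, ← Measure.prod_restrict,
    lintegral_prod_mul hf.aemeasurable hg.aemeasurable]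

lemma decreasingSet_Ioo_prod_Ioo (a b : ℝ) : DecreasingSet (Ioo 0 a ×ˢ Ioo 0 b) :=
  ⟨measurableSet_Ioo.prod measurableSet_Ioo, prod_mono (fun _ h => h.1) (fun _ h => h.1),
    fun _ _ _ _ hz hs' hs't ht' ht't => ⟨⟨hs', hs't.trans_lt hz.1.2⟩, ⟨ht', ht't.trans_lt hz.2.2⟩⟩⟩

lemma DecreasingSet.Ioo_prod_Ioo_subset {D : Set (ℝ × ℝ)} (hD : DecreasingSet D) {z : ℝ × ℝ}
    (hz : z ∈ D) : Ioo 0 z.1 ×ˢ Ioo 0 z.2 ⊆ D :=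
  fun _ hy => hD.2.2 _ _ _ _ hz hy.1.1 hy.1.2.le hy.2.1 hy.2.2.le

noncomputable def tailRatioSup (w : ℝ → ℝ≥0∞) : ℝ≥0∞ :=
  ⨆ (a : ℝ) (_ : 0 < a), ENNReal.ofReal a * dualHardy w a / ∫⁻ s in Ioo 0 a, w s

noncomputable def decreasingSetRatio (w₁ w₂ : ℝ → ℝ≥0∞) (D : Set (ℝ × ℝ)) : ℝ≥0∞ :=
  (∫⁻ s in Ioi 0, ∫⁻ t in Ioi 0, S2E (D.indicator fun _ => 1) s t * (w₁ s * w₂ t)) /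
    ∫⁻ z in D, w₁ z.1 * w₂ z.2

lemma ofReal_mul_dualHardy_le_tailRatioSup {w : ℝ → ℝ≥0∞} {a : ℝ} (ha : 0 < a)
    (h0 : ∫⁻ s in Ioo 0 a, w s ≠ 0) (htop : ∫⁻ s in Ioo 0 a, w s ≠ ⊤) :
    ENNReal.ofReal a * dualHardy w a ≤ tailRatioSup w * ∫⁻ s in Ioo 0 a, w s :=
  (ENNReal.div_le_iff_le_mul (Or.inl h0) (Or.inl htop)).1 <|
    le_iSup₂ (f := fun a (_ : 0 < a) =>
      ENNReal.ofReal a * dualHardy w a / ∫⁻ s in Ioo 0 a, w s) a ha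

section

variable {w₁ w₂ : ℝ → ℝ≥0∞} (hw₁ : Measurable w₁) (hw₂ : Measurable w₂)
  (h₁ : ∀ a, 0 < a → ∫⁻ s in Ioo 0 a, w₁ s ≠ 0) (h₁' : ∀ a, 0 < a → ∫⁻ s in Ioo 0 a, w₁ s ≠ ⊤)
  (h₂ : ∀ b, 0 < b → ∫⁻ t in Ioo 0 b, w₂ t ≠ 0) (h₂' : ∀ b, 0 < b → ∫⁻ t in Ioo 0 b, w₂ t ≠ ⊤)
include hw₁ hw₂ h₁ h₁' h₂ h₂'

lemma decreasingSetRatio_le {D : Set (ℝ × ℝ)} (hD : DecreasingSet D) (hD_ne : D.Nonempty) :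
    decreasingSetRatio w₁ w₂ D ≤ (1 + tailRatioSup w₁) * (1 + tailRatioSup w₂) := by
  obtain ⟨z, hz⟩ := hD_ne
  have hden : ∫⁻ z in D, w₁ z.1 * w₂ z.2 ≠ 0 := by
    refine ne_bot_of_le_ne_bot ?_ (lintegral_mono_set (hD.Ioo_prod_Ioo_subset hz))
    rw [setLIntegral_prod_mul_eq hw₁ hw₂]
    exact mul_ne_zero (h₁ _ (hD.2.1 hz).1) (h₂ _ (hD.2.1 hz).2)
  rw [decreasingSetRatio, lintegral_S2E_indicator_mul_eq hD.1 hD.2.1 hw₁ hw₂,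
    ENNReal.div_le_iff_le_mul (Or.inl hden) (Or.inr (by simp))]
  exact setLIntegral_dualHardy_mul_dualHardy_le hw₁ hw₂
    (fun a ha => ofReal_mul_dualHardy_le_tailRatioSup ha (h₁ a ha) (h₁' a ha))
    (fun b hb => ofReal_mul_dualHardy_le_tailRatioSup hb (h₂ b hb) (h₂' b hb)) hD

lemma decreasingSetRatio_Ioo_prod_Ioo {a b : ℝ} (ha : 0 < a) (hb : 0 < b) :
    decreasingSetRatio w₁ w₂ (Ioo 0 a ×ˢ Ioo 0 b) =
      (1 + ENNReal.ofReal a * dualHardy w₁ a / ∫⁻ s in Ioo 0 a, w₁ s) *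
        (1 + ENNReal.ofReal b * dualHardy w₂ b / ∫⁻ t in Ioo 0 b, w₂ t) := by
  have one_add_div {P X : ℝ≥0∞} (h0 : P ≠ 0) (htop : P ≠ ⊤) : (P + X) / P = 1 + X / P := by
    rw [ENNReal.add_div, ENNReal.div_self h0 htop]
  rw [decreasingSetRatio, lintegral_S2E_indicator_mul_eq (decreasingSet_Ioo_prod_Ioo a b).1
      (decreasingSet_Ioo_prod_Ioo a b).2.1 hw₁ hw₂,
    setLIntegral_prod_mul_eq (measurable_dualHardy w₁) (measurable_dualHardy w₂),
    setLIntegral_prod_mul_eq hw₁ hw₂, setLIntegral_Ioo_dualHardy hw₁ ha,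
    setLIntegral_Ioo_dualHardy hw₂ hb, ENNReal.mul_div_mul_comm (Or.inl (h₁ a ha))
      (Or.inl (h₁' a ha)), one_add_div (h₁ a ha) (h₁' a ha), one_add_div (h₂ b hb) (h₂' b hb)]

theorem iSup_decreasingSetRatio_eq :
    ⨆ (D : Set (ℝ × ℝ)) (_ : DecreasingSet D ∧ D.Nonempty), decreasingSetRatio w₁ w₂ D =
      (1 + tailRatioSup w₁) * (1 + tailRatioSup w₂) := by
  refine le_antisymm (iSup₂_le fun D hD =>
    decreasingSetRatio_le hw₁ hw₂ h₁ h₁' h₂ h₂' hD.1 hD.2) ?_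
  rw [tailRatioSup, tailRatioSup, ENNReal.add_biSup' ⟨1, one_pos⟩,
    ENNReal.add_biSup' ⟨1, one_pos⟩]
  simp_rw [ENNReal.iSup_mul, ENNReal.mul_iSup]
  refine iSup₂_le fun a ha => iSup₂_le fun b hb => ?_
  rw [← decreasingSetRatio_Ioo_prod_Ioo hw₁ hw₂ h₁ h₁' h₂ h₂' ha hb]
  exact le_iSup₂ (f := fun D (_ : DecreasingSet D ∧ D.Nonempty) => decreasingSetRatio w₁ w₂ D)
    _ ⟨decreasingSet_Ioo_prod_Ioo a b, ⟨(a / 2, b / 2), ⟨by linarith, by linarith⟩,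
      ⟨by linarith, by linarith⟩⟩⟩

end

lemma dualHardy_congr_ae {w w' : ℝ → ℝ≥0∞} (h : w =ᵐ[volume.restrict (Ioi 0)] w') {a : ℝ}
    (ha : 0 ≤ a) : dualHardy w a = dualHardy w' a :=
  lintegral_congr_ae <| (ae_restrict_of_ae_restrict_of_subset (Ioi_subset_Ioi ha) h).mono
    fun _ hs => by simp only [hs]

lemma setLIntegral_Ioo_congr_ae {w w' : ℝ → ℝ≥0∞} (h : w =ᵐ[volume.restrict (Ioi 0)] w')
    (a : ℝ) : ∫⁻ s in Ioo 0 a, w s = ∫⁻ s in Ioo 0 a, w' s :=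
  lintegral_congr_ae (ae_restrict_of_ae_restrict_of_subset Ioo_subset_Ioi_self h)

lemma tailRatioSup_congr_ae {w w' : ℝ → ℝ≥0∞} (h : w =ᵐ[volume.restrict (Ioi 0)] w') :
    tailRatioSup w = tailRatioSup w' :=
  biSup_congr fun a ha => by rw [dualHardy_congr_ae h ha.le, setLIntegral_Ioo_congr_ae h]

lemma decreasingSetRatio_congr_ae {w₁ w₁' w₂ w₂' : ℝ → ℝ≥0∞}
    (h₁ : w₁ =ᵐ[volume.restrict (Ioi 0)] w₁') (h₂ : w₂ =ᵐ[volume.restrict (Ioi 0)] w₂')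
    {D : Set (ℝ × ℝ)} (hD : D ⊆ Ioi 0 ×ˢ Ioi 0) :
    decreasingSetRatio w₁ w₂ D = decreasingSetRatio w₁' w₂' D := by
  have hprod : ∀ᵐ z ∂volume.restrict (Ioi (0 : ℝ) ×ˢ Ioi 0),
      w₁ z.1 * w₂ z.2 = w₁' z.1 * w₂' z.2 := by
    rw [Measure.volume_eq_prod, ← Measure.prod_restrict]
    filter_upwards [Measure.quasiMeasurePreserving_fst.ae_eq h₁,
      Measure.quasiMeasurePreserving_snd.ae_eq h₂] with z hz₁ hz₂
    simp only [Function.comp_apply] at hz₁ hz₂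
    rw [hz₁, hz₂]
  rw [decreasingSetRatio, decreasingSetRatio,
    lintegral_congr_ae (ae_restrict_of_ae_restrict_of_subset hD hprod)]
  congr 1
  exact lintegral_congr_ae <| h₁.mono fun s hs =>
    lintegral_congr_ae <| h₂.mono fun t ht => by simp only [hs, ht]

lemma tailRatioSup_ofReal (u : ℝ → ℝ) :
    ⨆ (a : ℝ) (_ : 0 < a), (ENNReal.ofReal a * ∫⁻ s in Ioi a, ENNReal.ofReal (u s / s)) /
      ∫⁻ s in Ioo (0:ℝ) a, ENNReal.ofReal (u s) = tailRatioSup fun s => ENNReal.ofReal (u s) :=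
  biSup_congr fun a ha => by
    rw [dualHardy, setLIntegral_congr_fun measurableSet_Ioi fun s hs =>
      ENNReal.ofReal_div_of_pos (ha.trans hs)]

/-- for product weights, the supremum over nonempty decreasing sets `D` of
`∫_{ℝ²₊} S²(χ_D) u v / ∫_D u v` equals
`(1 + sup_a (a∫_a^∞ u(s)/s ds)/(∫_0^a u)) (1 + sup_b (b∫_b^∞ v(t)/t dt)/(∫_0^b v))`. -/
theorem sup_quotient_decreasing_sets (u v : ℝ → ℝ) (hu : IsWeight u) (hv : IsWeight v)
    (hu1 : ∀ a : ℝ, 0 < a → 0 < ∫⁻ s in Ioo (0:ℝ) a, ENNReal.ofReal (u s))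
    (hu2 : ∀ a : ℝ, 0 < a → (∫⁻ s in Ioo (0:ℝ) a, ENNReal.ofReal (u s)) < ⊤)
    (hv1 : ∀ b : ℝ, 0 < b → 0 < ∫⁻ t in Ioo (0:ℝ) b, ENNReal.ofReal (v t))
    (hv2 : ∀ b : ℝ, 0 < b → (∫⁻ t in Ioo (0:ℝ) b, ENNReal.ofReal (v t)) < ⊤) :
    (⨆ (D : Set (ℝ × ℝ)) (_ : DecreasingSet D ∧ D.Nonempty),
        (∫⁻ s in Ioi (0:ℝ), ∫⁻ t in Ioi (0:ℝ),
            S2E (D.indicator fun _ => (1:ℝ≥0∞)) s t *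
              (ENNReal.ofReal (u s) * ENNReal.ofReal (v t))) /
          ∫⁻ z in D, ENNReal.ofReal (u z.1) * ENNReal.ofReal (v z.2)) =
      (1 + ⨆ (a : ℝ) (_ : 0 < a),
          (ENNReal.ofReal a * ∫⁻ s in Ioi a, ENNReal.ofReal (u s / s)) /
            ∫⁻ s in Ioo (0:ℝ) a, ENNReal.ofReal (u s)) *
        (1 + ⨆ (b : ℝ) (_ : 0 < b),
          (ENNReal.ofReal b * ∫⁻ t in Ioi b, ENNReal.ofReal (v t / t)) /
            ∫⁻ t in Ioo (0:ℝ) b, ENNReal.ofReal (v t)) := by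
  have hu_meas : AEMeasurable (fun s => ENNReal.ofReal (u s)) (volume.restrict (Ioi 0)) :=
    hu.2.aestronglyMeasurable.aemeasurable.ennreal_ofReal
  have hv_meas : AEMeasurable (fun t => ENNReal.ofReal (v t)) (volume.restrict (Ioi 0)) :=
    hv.2.aestronglyMeasurable.aemeasurable.ennreal_ofReal
  have hu_Ioo := setLIntegral_Ioo_congr_ae hu_meas.ae_eq_mk
  have hv_Ioo := setLIntegral_Ioo_congr_ae hv_meas.ae_eq_mk
  rw [tailRatioSup_ofReal, tailRatioSup_ofReal, tailRatioSup_congr_ae hu_meas.ae_eq_mk,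
    tailRatioSup_congr_ae hv_meas.ae_eq_mk,
    ← iSup_decreasingSetRatio_eq hu_meas.measurable_mk hv_meas.measurable_mk
      (fun a ha => hu_Ioo a ▸ (hu1 a ha).ne') (fun a ha => hu_Ioo a ▸ (hu2 a ha).ne)
      (fun b hb => hv_Ioo b ▸ (hv1 b hb).ne') (fun b hb => hv_Ioo b ▸ (hv2 b hb).ne)]
  exact biSup_congr fun D hD => decreasingSetRatio_congr_ae hu_meas.ae_eq_mk hv_meas.ae_eq_mk
    hD.1.2.1
end

section
/- Let f = χ_{(0,1]×(0,1]} on ℝ²₊. Then S²f(s,t) = min(s,1)·min(t,1)/(st) for s,t > 0, and sup_{λ>0} λ·|{(s,t) ∈ ℝ²₊ : S²f(s,t) > λ}| = ∞, where |·| is two-dimensional Lebesgue measure. In particular, S² is not bounded from the cone of nonnegative functions on ℝ²₊ nonincreasing in each variable in L¹(ℝ²₊) into weak-L¹(ℝ²₊); i.e., the constant weight 1 does not belong to B^{(2)}_{1,∞}. -/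
open MeasureTheory ENNReal Set

section
private lemma aux_S2f (s t : ℝ) (hs : 0 < s) (ht : 0 < t) :
    S2E ((Ioc (0:ℝ) 1 ×ˢ Ioc (0:ℝ) 1).indicator fun _ => (1:ℝ≥0∞)) s t =
      ENNReal.ofReal (min s 1 * min t 1 / (s * t)) := by
  have hvol : ∀ r : ℝ, 0 < r →
      (∫⁻ x in Ioo (0:ℝ) r, (Ioc (0:ℝ) 1).indicator (fun _ => (1:ℝ≥0∞)) x)
        = ENNReal.ofReal (min r 1) := by
    intro r hr
    have h0 : (∫⁻ x in Ioo (0:ℝ) r, (Ioc (0:ℝ) 1).indicator (fun _ => (1:ℝ≥0∞)) x)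
        = volume.restrict (Ioo (0:ℝ) r) (Ioc (0:ℝ) 1) :=
      lintegral_indicator_one measurableSet_Ioc
    rw [h0, Measure.restrict_apply measurableSet_Ioc]
    rcases le_or_gt r 1 with h | h
    · rw [Set.inter_eq_right.mpr (by intro x hx; exact ⟨hx.1, hx.2.le.trans h⟩),
        Real.volume_Ioo, min_eq_left h, sub_zero]
    · rw [Set.inter_eq_left.mpr (by intro x hx; exact ⟨hx.1, lt_of_le_of_lt hx.2 h⟩),
        Real.volume_Ioc, min_eq_right h.le, sub_zero]
  have hind : ∀ a b : ℝ, (Ioc (0:ℝ) 1 ×ˢ Ioc (0:ℝ) 1).indicator (fun _ => (1:ℝ≥0∞)) (a, b)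
      = (Ioc (0:ℝ) 1).indicator (fun _ => (1:ℝ≥0∞)) a
        * (Ioc (0:ℝ) 1).indicator (fun _ => (1:ℝ≥0∞)) b := by
    intro a b
    by_cases h1 : a ∈ Ioc (0:ℝ) 1 <;> by_cases h2 : b ∈ Ioc (0:ℝ) 1 <;>
      simp [Set.indicator_apply, Set.mem_prod, h1, h2]
  have hmeasi : Measurable ((Ioc (0:ℝ) 1).indicator (fun _ => (1:ℝ≥0∞))) :=
    measurable_const.indicator measurableSet_Ioc
  unfold S2E
  have h1 : (∫⁻ σ in Ioo (0:ℝ) s, ∫⁻ τ in Ioo (0:ℝ) t,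
        (Ioc (0:ℝ) 1 ×ˢ Ioc (0:ℝ) 1).indicator (fun _ => (1:ℝ≥0∞)) (σ, τ))
      = ENNReal.ofReal (min s 1) * ENNReal.ofReal (min t 1) := by
    have : ∀ σ : ℝ, (∫⁻ τ in Ioo (0:ℝ) t,
        (Ioc (0:ℝ) 1 ×ˢ Ioc (0:ℝ) 1).indicator (fun _ => (1:ℝ≥0∞)) (σ, τ))
        = (Ioc (0:ℝ) 1).indicator (fun _ => (1:ℝ≥0∞)) σ * ENNReal.ofReal (min t 1) := by
      intro σ
      simp_rw [hind σ]
      rw [lintegral_const_mul _ hmeasi, hvol t ht]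
    simp_rw [this]
    rw [lintegral_mul_const _ hmeasi, hvol s hs]
  rw [h1, ENNReal.ofReal_div_of_pos (mul_pos hs ht), div_eq_mul_inv,
    ENNReal.ofReal_mul (le_min hs.le zero_le_one)]
  ring
end

private lemma aux_lower (N : ℕ) (hN : 1 ≤ N) :
    (N : ℝ≥0∞) * ENNReal.ofReal (4⁻¹ : ℝ) ≤
      ENNReal.ofReal (((2:ℝ)^(2*N))⁻¹) *
        volume {z : ℝ × ℝ | 0 < z.1 ∧ 0 < z.2 ∧
          ENNReal.ofReal (((2:ℝ)^(2*N))⁻¹) <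
            S2E ((Ioc (0:ℝ) 1 ×ˢ Ioc (0:ℝ) 1).indicator fun _ => (1:ℝ≥0∞)) z.1 z.2} := by
  set l : ℝ := ((2:ℝ)^(2*N))⁻¹ with hl
  set E := {z : ℝ × ℝ | 0 < z.1 ∧ 0 < z.2 ∧
      ENNReal.ofReal l <
        S2E ((Ioc (0:ℝ) 1 ×ˢ Ioc (0:ℝ) 1).indicator fun _ => (1:ℝ≥0∞)) z.1 z.2} with hE
  set R : ℕ → Set (ℝ × ℝ) := fun k =>
    Ioo ((2:ℝ)^k) ((2:ℝ)^(k+1)) ×ˢ Ioo ((2:ℝ)^(2*N-k-2)) ((2:ℝ)^(2*N-k-1)) with hR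
  have hone : ∀ m : ℕ, (1:ℝ) ≤ 2 ^ m := fun m => one_le_pow₀ (by norm_num)
  have hsub : ∀ k ∈ Finset.range N, R k ⊆ E := by
    intro k hk
    have hk' : k < N := Finset.mem_range.mp hk
    rintro ⟨a, b⟩ ⟨⟨ha1, ha2⟩, ⟨hb1, hb2⟩⟩
    have hka : (1:ℝ) < a := lt_of_le_of_lt (hone k) ha1
    have hkb : (1:ℝ) < b := lt_of_le_of_lt (hone _) hb1
    have ha0 : (0:ℝ) < a := lt_trans one_pos hka
    have hb0 : (0:ℝ) < b := lt_trans one_pos hkb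
    refine ⟨ha0, hb0, ?_⟩
    rw [aux_S2f a b ha0 hb0, min_eq_right hka.le, min_eq_right hkb.le, one_mul]
    rw [ENNReal.ofReal_lt_ofReal_iff (by positivity)]
    have hab : a * b < (2:ℝ)^(2*N) := by
      have h1 : a * b < (2:ℝ)^(k+1) * (2:ℝ)^(2*N-k-1) :=
        mul_lt_mul'' ha2 hb2 ha0.le hb0.le
      have h2 : (2:ℝ)^(k+1) * (2:ℝ)^(2*N-k-1) = 2^(2*N) := by
        rw [← pow_add]; congr 1; omega
      linarith
    rw [hl, one_div]
    exact inv_strictAnti₀ (by positivity) hab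
  have hmeasR : ∀ k ∈ Finset.range N, MeasurableSet (R k) := fun k _ =>
    measurableSet_Ioo.prod measurableSet_Ioo
  have hdisj : (Finset.range N : Set ℕ).PairwiseDisjoint R := by
    intro i _ j _ hij
    have key : ∀ i j : ℕ, i < j →
        Disjoint (Ioo ((2:ℝ)^i) ((2:ℝ)^(i+1))) (Ioo ((2:ℝ)^j) ((2:ℝ)^(j+1))) := by
      intro i j h
      rw [Set.Ioo_disjoint_Ioo]
      refine le_trans (min_le_left _ _) (le_trans ?_ (le_max_right _ _))
      exact pow_le_pow_right₀ (by norm_num) h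
    rcases lt_or_gt_of_ne hij with h | h
    · exact Set.disjoint_prod.mpr (Or.inl (key i j h))
    · exact Set.disjoint_prod.mpr (Or.inl (key j i h).symm)
  have hvolR : ∀ k ∈ Finset.range N, volume (R k) = ENNReal.ofReal ((2:ℝ)^(2*N-2)) := by
    intro k hk
    have hk' : k < N := Finset.mem_range.mp hk
    rw [hR]
    simp only
    have e1 : (2:ℝ)^(k+1) - 2^k = 2^k := by rw [pow_succ]; ring
    have e2 : (2:ℝ)^(2*N-k-1) - 2^(2*N-k-2) = 2^(2*N-k-2) := by
      rw [show 2*N-k-1 = (2*N-k-2)+1 from by omega, pow_succ]; ring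
    have e3 : k + (2*N-k-2) = 2*N-2 := by omega
    rw [Measure.volume_eq_prod, Measure.prod_prod, Real.volume_Ioo, Real.volume_Ioo,
      e1, e2, ← ENNReal.ofReal_mul (by positivity), ← pow_add, e3]
  have hvolU : (N : ℝ≥0∞) * ENNReal.ofReal ((2:ℝ)^(2*N-2)) ≤ volume E := by
    calc (N : ℝ≥0∞) * ENNReal.ofReal ((2:ℝ)^(2*N-2))
        = ∑ k ∈ Finset.range N, volume (R k) := by
          rw [Finset.sum_congr rfl hvolR, Finset.sum_const, Finset.card_range,
            nsmul_eq_mul]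
      _ = volume (⋃ k ∈ Finset.range N, R k) :=
          (measure_biUnion_finset hdisj hmeasR).symm
      _ ≤ volume E := measure_mono (Set.iUnion₂_subset hsub)
  have hkey : l * (2:ℝ)^(2*N-2) = 4⁻¹ := by
    have h2 : (2:ℝ)^(2*N) = 2^(2*N-2) * 4 := by
      rw [show 2*N = (2*N-2)+2 from by omega, pow_add]; norm_num
    rw [hl, h2, mul_inv, mul_comm ((2:ℝ)^(2*N-2))⁻¹, mul_assoc,
      inv_mul_cancel₀ (by positivity), mul_one]
  calc (N : ℝ≥0∞) * ENNReal.ofReal (4⁻¹ : ℝ)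
      = ENNReal.ofReal l * ((N : ℝ≥0∞) * ENNReal.ofReal ((2:ℝ)^(2*N-2))) := by
        rw [← mul_assoc, mul_comm (ENNReal.ofReal l), mul_assoc,
          ← ENNReal.ofReal_mul (by positivity), hkey]
    _ ≤ ENNReal.ofReal l * volume E := mul_le_mul_right hvolU _

private lemma aux_sup_top :
    (⨆ (l : ℝ) (_ : 0 < l),
        ENNReal.ofReal l *
          volume {z : ℝ × ℝ | 0 < z.1 ∧ 0 < z.2 ∧
            ENNReal.ofReal l <
              S2E ((Ioc (0:ℝ) 1 ×ˢ Ioc (0:ℝ) 1).indicator fun _ => (1:ℝ≥0∞)) z.1 z.2} = ⊤) := by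
  apply ENNReal.eq_top_of_forall_nnreal_le
  intro r
  set n : ℕ := ⌈(r : NNReal)⌉₊ with hn
  set N : ℕ := 4 * (n + 1) with hNdef
  have hN : 1 ≤ N := by omega
  have hr : (r : ℝ≥0∞) ≤ ((n + 1 : ℕ) : ℝ≥0∞) := by
    have : r ≤ ((n : NNReal)) := Nat.le_ceil r
    have h2 : (r : ℝ≥0∞) ≤ ((n : NNReal) : ℝ≥0∞) := ENNReal.coe_le_coe.2 this
    refine le_trans h2 ?_
    push_cast
    exact le_add_of_nonneg_right zero_le_one
  have hcast : ((N : ℕ) : ℝ≥0∞) * ENNReal.ofReal (4⁻¹ : ℝ) = ((n + 1 : ℕ) : ℝ≥0∞) := by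
    rw [ENNReal.ofReal_inv_of_pos (by norm_num), ENNReal.ofReal_ofNat]
    rw [hNdef]
    push_cast
    rw [mul_comm (4 : ℝ≥0∞), mul_assoc, ENNReal.mul_inv_cancel (by norm_num) (by norm_num),
      mul_one]
  have hbound := aux_lower N hN
  rw [hcast] at hbound
  refine le_trans hr (le_trans hbound ?_)
  exact le_iSup₂_of_le (((2:ℝ)^(2*N))⁻¹) (by positivity) le_rfl


/-- for `f = χ_{(0,1]×(0,1]}`, `S²f(s,t) = min(s,1)min(t,1)/(st)`,
`sup_{λ>0} λ |{S²f > λ}| = ∞`, and the constant weight `1` is not in `B^{(2)}_{1,∞}`. -/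
theorem one_not_in_Bp2_weak :
    (∀ s t : ℝ, 0 < s → 0 < t →
        S2E ((Ioc (0:ℝ) 1 ×ˢ Ioc (0:ℝ) 1).indicator fun _ => (1:ℝ≥0∞)) s t =
          ENNReal.ofReal (min s 1 * min t 1 / (s * t))) ∧
    (⨆ (l : ℝ) (_ : 0 < l),
        ENNReal.ofReal l *
          volume {z : ℝ × ℝ | 0 < z.1 ∧ 0 < z.2 ∧
            ENNReal.ofReal l <
              S2E ((Ioc (0:ℝ) 1 ×ˢ Ioc (0:ℝ) 1).indicator fun _ => (1:ℝ≥0∞)) z.1 z.2} = ⊤) ∧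
    ¬ ∃ C : ℝ, 0 < C ∧ ∀ g : ℝ × ℝ → ℝ≥0∞, Measurable g → BiAntitone g →
        ∀ l : ℝ, 0 < l →
          ENNReal.ofReal l *
              volume {z : ℝ × ℝ | 0 < z.1 ∧ 0 < z.2 ∧ ENNReal.ofReal l < S2E g z.1 z.2} ≤
            ENNReal.ofReal C * ∫⁻ z in Ioi (0:ℝ) ×ˢ Ioi (0:ℝ), g z := by
  refine ⟨fun s t hs ht => aux_S2f s t hs ht, aux_sup_top, ?_⟩
  rintro ⟨C, hC, h⟩
  set f : ℝ × ℝ → ℝ≥0∞ := (Ioc (0:ℝ) 1 ×ˢ Ioc (0:ℝ) 1).indicator fun _ => (1:ℝ≥0∞) with hf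
  have hB : MeasurableSet (Ioc (0:ℝ) 1 ×ˢ Ioc (0:ℝ) 1) :=
    measurableSet_Ioc.prod measurableSet_Ioc
  have hmeas : Measurable f := measurable_const.indicator hB
  have hanti : BiAntitone f := by
    intro s s' t t' hs' hss' ht' htt'
    by_cases hst : (s, t) ∈ Ioc (0:ℝ) 1 ×ˢ Ioc (0:ℝ) 1
    · have h2 : (s', t') ∈ Ioc (0:ℝ) 1 ×ˢ Ioc (0:ℝ) 1 :=
        ⟨⟨hs', le_trans hss' hst.1.2⟩, ⟨ht', le_trans htt' hst.2.2⟩⟩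
      simp [hf, Set.indicator_apply, hst, h2]
    · simp [hf, Set.indicator_apply, hst]
  have hint : (∫⁻ z in Ioi (0:ℝ) ×ˢ Ioi (0:ℝ), f z) = 1 := by
    have h0 : (∫⁻ z in Ioi (0:ℝ) ×ˢ Ioi (0:ℝ), f z)
        = volume.restrict (Ioi (0:ℝ) ×ˢ Ioi (0:ℝ)) (Ioc (0:ℝ) 1 ×ˢ Ioc (0:ℝ) 1) :=
      lintegral_indicator_one hB
    rw [h0, Measure.restrict_apply hB,
      Set.inter_eq_left.mpr (Set.prod_mono Ioc_subset_Ioi_self Ioc_subset_Ioi_self)]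
    rw [Measure.volume_eq_prod, Measure.prod_prod, Real.volume_Ioc]
    norm_num
  have hle : (⨆ (l : ℝ) (_ : 0 < l),
      ENNReal.ofReal l *
        volume {z : ℝ × ℝ | 0 < z.1 ∧ 0 < z.2 ∧ ENNReal.ofReal l < S2E f z.1 z.2})
      ≤ ENNReal.ofReal C := by
    refine iSup₂_le fun l hl => ?_
    have := h f hmeas hanti l hl
    rwa [hint, mul_one] at this
  rw [hf] at hle
  rw [aux_sup_top] at hle
  exact (ENNReal.ofReal_ne_top) (top_le_iff.mp hle)
end
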